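/- arXiv:2104.14263 — 3 statements merged into one kernel-verified Lean document; each statement's English description precedes it below -/
import Mathlib

section
/- Let W be a Stone space with Boolean ring R of compact open subsets, P a poset, and T : R → 2^P a function satisfying: (1) T(A) = ∅ iff A = ∅; (2) for each p ∈ P there is A ∈ R with p ∈ T(A); (3) T(A ∪ B) = T(A) ∪ T(B) for all A, B ∈ R; (4) if p ∈ T(A) then there is B ∈ R with B ⊆ A and T(B) = {q ∈ P | q ≥ p}; (5) every A ∈ R is a finite union of sets B ∈ R with T(B) = {q ∈ P | q ≥ p} for some p ∈ P. Then there is a unique trim P-partition of W whose type function is T (i.e. T(A) = {p ∈ P | A ∩ X_p ≠ ∅} for all A ∈ R), and this partition is complete if and only if P satisfies the ascending chain condition. -/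
open Set

variable {P W : Type*} [PartialOrder P] [TopologicalSpace W]

/-- The type of a subset `Y` with respect to the family `X`. -/
def ptype (X : P → Set W) (Y : Set W) : Set P :=
  {p | (Y ∩ X p).Nonempty}

/-- `A` is a `p`-trim set: a compact open set whose type is exactly `{q | p ≤ q}`. -/
def IsTrimSet (X : P → Set W) (p : P) (A : Set W) : Prop :=
  IsCompact A ∧ IsOpen A ∧ ptype X A = Ici p

/-- `P̂`: the set of labels `p` for which a `p`-trim set exists. -/
def trimHat (X : P → Set W) : Set P :=
  {p | ∃ A, IsTrimSet X p A}

/-- A `P`-partition: a pairwise disjoint family of nonempty subsets. -/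
structure IsPPartition (X : P → Set W) : Prop where
  nonempty : ∀ p, (X p).Nonempty
  pairwise_disjoint : Pairwise fun p q => Disjoint (X p) (X q)

/-- A semi-trim `P`-partition. -/
structure IsSemiTrim (X : P → Set W) extends IsPPartition X : Prop where
  nhds_base : ∀ w : W, ∀ U ∈ nhds w, ∃ p A, IsTrimSet X p A ∧ w ∈ A ∧ A ⊆ U
  trim_dense : ∀ A : Set W, IsOpen A → ∀ p ∈ ptype X A ∩ trimHat X,
    ∃ B ⊆ A, IsTrimSet X p B
  label_sup : ∀ p, ∀ x ∈ X p, IsLUB {q | ∃ A, IsTrimSet X q A ∧ x ∈ A} p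
  full : ∀ p : P, ∀ w : W,
    (∀ U ∈ nhds w, ∃ A, IsTrimSet X p A ∧ w ∈ A ∧ A ⊆ U) → w ∈ X p

/-- A trim `P`-partition: every point of `W` has a neighbourhood base of trim sets, every
point of `X p` has a `p`-trim neighbourhood, and the partition is full. -/
structure IsTrimPartition (X : P → Set W) extends IsPPartition X : Prop where
  nhds_base : ∀ w : W, ∀ U ∈ nhds w, ∃ p A, IsTrimSet X p A ∧ w ∈ A ∧ A ⊆ U
  clean : ∀ p, ∀ x ∈ X p, ∃ A, IsTrimSet X p A ∧ x ∈ A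
  full : ∀ p : P, ∀ w : W,
    (∀ U ∈ nhds w, ∃ A, IsTrimSet X p A ∧ w ∈ A ∧ A ⊆ U) → w ∈ X p

/-!
A trim partition with type function `T` is forced: `X p` must consist of the points having a
neighbourhood base of compact open sets `A` with `T A = Ici p`, and this choice works. The heart
of the matter is that every such `A` contains a point of `X p`: otherwise compactness would cover
`A` by finitely many compact open sets whose types miss `p`, and additivity of `T` would give
`p ∉ T A`. This yields `ptype X = T`, from which trimness follows.

Under the ACC a point lies in `X r` for a maximal label `r` of its trim neighbourhoods. Conversely,
given a strictly increasing chain `f`, nest `f n`-trim sets `A n`. If every point were covered, the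
same compactness argument would give a compact open neighbourhood of `⋂ n, A n` whose type misses
the chain; it would contain some `A n`, whose type contains `f n`.
-/

open Filter Topology

theorem wellFoundedGT_iff_forall_not_strictMono {α : Type*} [Preorder α] :
    WellFoundedGT α ↔ ∀ f : ℕ → α, ¬ StrictMono f :=
  ⟨fun _ => not_strictMono_of_wellFoundedGT, fun h =>
    ⟨RelEmbedding.wellFounded_iff_isEmpty.2
      ⟨fun f => h f fun _ _ hab => f.map_rel_iff.2 hab⟩⟩⟩

def nhdsBaseLocus (S : P → Set W → Prop) (p : P) : Set W :=
  {w | ∀ U ∈ 𝓝 w, ∃ A, S p A ∧ w ∈ A ∧ A ⊆ U}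

section TrimPartition

variable {X : P → Set W} {p q : P} {A : Set W} {x : W}

theorem IsTrimSet.le_of_mem (hA : IsTrimSet X p A) (hxA : x ∈ A) (hx : x ∈ X q) : p ≤ q := by
  have hq : q ∈ ptype X A := ⟨x, hxA, hx⟩
  rwa [hA.2.2] at hq

theorem pairwise_disjoint_of_forall_mem_isTrimSet
    (h : ∀ p, ∀ x ∈ X p, ∃ A, IsTrimSet X p A ∧ x ∈ A) :
    Pairwise fun p q => Disjoint (X p) (X q) := by
  have hle : ∀ {p q x}, x ∈ X p → x ∈ X q → p ≤ q := fun hxp hxq =>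
    let ⟨_, hA, hxA⟩ := h _ _ hxp
    hA.le_of_mem hxA hxq
  exact fun p q hpq => disjoint_left.2 fun x hxp hxq =>
    hpq (le_antisymm (hle hxp hxq) (hle hxq hxp))

theorem IsTrimPartition.eq_nhdsBaseLocus (hX : IsTrimPartition X) :
    X = nhdsBaseLocus (IsTrimSet X) := by
  funext p
  refine Subset.antisymm (fun x hx U hU => ?_) (hX.full p)
  obtain ⟨A, hA, hxA⟩ := hX.clean p x hx
  obtain ⟨q, B, hB, hxB, hBUA⟩ := hX.nhds_base x (U ∩ A) (inter_mem hU (hA.2.1.mem_nhds hxA))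
  obtain ⟨y, hyB, hyq⟩ : (B ∩ X q).Nonempty := by
    change q ∈ ptype X B
    rw [hB.2.2]
    exact self_mem_Ici
  obtain rfl : q = p :=
    le_antisymm (hB.le_of_mem hxB hx) (hA.le_of_mem (hBUA hyB).2 hyq)
  exact ⟨B, hB, hxB, hBUA.trans inter_subset_left⟩

end TrimPartition

section TypeFunction

variable (T : Set W → Set P)

def IsTrimFor (p : P) (A : Set W) : Prop :=
  IsCompact A ∧ IsOpen A ∧ T A = Ici p

def partitionOf : P → Set W :=
  nhdsBaseLocus (IsTrimFor T)

variable {T} {p q : P} {A B : Set W} {w : W}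

theorem isTrimSet_eq_isTrimFor {X : P → Set W}
    (hX : ∀ A : Set W, IsCompact A → IsOpen A → ptype X A = T A) :
    IsTrimSet X = IsTrimFor T := by
  funext p A
  refine propext (and_congr_right fun hc => and_congr_right fun ho => ?_)
  rw [hX A hc ho]

omit [PartialOrder P] in
theorem monotoneOn_of_union
    (hunion : ∀ A B : Set W, IsCompact A → IsOpen A → IsCompact B → IsOpen B →
      T (A ∪ B) = T A ∪ T B) :
    MonotoneOn T {A | IsCompact A ∧ IsOpen A} := by
  rintro A ⟨hAc, hAo⟩ B ⟨hBc, hBo⟩ hAB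
  rw [← union_eq_self_of_subset_left hAB, hunion A B hAc hAo hBc hBo]
  exact subset_union_left

theorem IsTrimFor.le_of_subset (hmono : MonotoneOn T {A | IsCompact A ∧ IsOpen A})
    (hA : IsTrimFor T p A) (hB : IsTrimFor T q B) (hBA : B ⊆ A) : p ≤ q := by
  have hq : q ∈ T A := hmono ⟨hB.1, hB.2.1⟩ ⟨hA.1, hA.2.1⟩ hBA (hB.2.2 ▸ self_mem_Ici)
  rwa [hA.2.2] at hq

theorem exists_isCompact_isOpen_mem_subset [LocallyCompactSpace W] [TotallyDisconnectedSpace W]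
    [T2Space W] {U : Set W} (hU : U ∈ 𝓝 w) :
    ∃ C : Set W, IsCompact C ∧ IsOpen C ∧ w ∈ C ∧ C ⊆ U := by
  obtain ⟨K, hKw, hKU, hK⟩ := local_compact_nhds hU
  obtain ⟨C, hC, hwC, hCK⟩ := loc_compact_Haus_tot_disc_of_zero_dim.mem_nhds_iff.1 hKw
  exact ⟨C, hK.of_isClosed_subset hC.1 hCK, hC.2, hwC, hCK.trans hKU⟩

theorem exists_isTrimFor_mem_subset [LocallyCompactSpace W] [TotallyDisconnectedSpace W]
    [T2Space W]
    (hdecomp : ∀ A : Set W, IsCompact A → IsOpen A →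
      ∃ (n : ℕ) (B : Fin n → Set W) (p : Fin n → P),
        (∀ i, IsCompact (B i) ∧ IsOpen (B i) ∧ T (B i) = Ici (p i)) ∧ A = ⋃ i, B i)
    {U : Set W} (hU : U ∈ 𝓝 w) :
    ∃ p A, IsTrimFor T p A ∧ w ∈ A ∧ A ⊆ U := by
  obtain ⟨C, hCc, hCo, hwC, hCU⟩ := exists_isCompact_isOpen_mem_subset hU
  obtain ⟨n, B, p, hB, rfl⟩ := hdecomp C hCc hCo
  obtain ⟨i, hwB⟩ := mem_iUnion.1 hwC
  exact ⟨p i, B i, hB i, hwB, (subset_iUnion B i).trans hCU⟩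

omit [PartialOrder P] in
theorem exists_superset_disjoint_type (hempty : T ∅ = ∅)
    (hunion : ∀ A B : Set W, IsCompact A → IsOpen A → IsCompact B → IsOpen B →
      T (A ∪ B) = T A ∪ T B)
    {K : Set W} (hK : IsCompact K) {s : Set P}
    (hloc : ∀ x ∈ K, ∃ C : Set W, IsCompact C ∧ IsOpen C ∧ x ∈ C ∧ Disjoint (T C) s) :
    ∃ C : Set W, IsCompact C ∧ IsOpen C ∧ K ⊆ C ∧ Disjoint (T C) s := by
  refine IsCompact.induction_on
    (p := fun K => ∃ C : Set W, IsCompact C ∧ IsOpen C ∧ K ⊆ C ∧ Disjoint (T C) s) hK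
    ⟨∅, isCompact_empty, isOpen_empty, subset_rfl, by simp [hempty]⟩
    (fun K L hKL ⟨C, hCc, hCo, hLC, hC⟩ => ⟨C, hCc, hCo, hKL.trans hLC, hC⟩)
    (fun K L ⟨C, hCc, hCo, hKC, hC⟩ ⟨D, hDc, hDo, hLD, hD⟩ =>
      ⟨C ∪ D, hCc.union hDc, hCo.union hDo, union_subset_union hKC hLD,
        by rw [hunion C D hCc hCo hDc hDo]; exact hC.sup_left hD⟩) fun x hx => ?_
  obtain ⟨C, hCc, hCo, hxC, hC⟩ := hloc x hx
  exact ⟨C, mem_nhdsWithin_of_mem_nhds (hCo.mem_nhds hxC), C, hCc, hCo, subset_rfl, hC⟩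

section Base

variable (hbase : ∀ w : W, ∀ U ∈ 𝓝 w, ∃ p A, IsTrimFor T p A ∧ w ∈ A ∧ A ⊆ U)
include hbase

theorem IsTrimFor.exists_ge_mem_subset (hmono : MonotoneOn T {A | IsCompact A ∧ IsOpen A})
    (hA : IsTrimFor T p A) (hwA : w ∈ A) {U : Set W} (hU : U ∈ 𝓝 w) :
    ∃ q B, p ≤ q ∧ IsTrimFor T q B ∧ w ∈ B ∧ B ⊆ U := by
  obtain ⟨q, B, hB, hwB, hBUA⟩ := hbase w (U ∩ A) (inter_mem hU (hA.2.1.mem_nhds hwA))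
  exact ⟨q, B, hA.le_of_subset hmono hB (hBUA.trans inter_subset_right), hB, hwB,
    hBUA.trans inter_subset_left⟩

theorem mem_partitionOf (hmono : MonotoneOn T {A | IsCompact A ∧ IsOpen A})
    (hA : IsTrimFor T p A) (hwA : w ∈ A)
    (hw : ∀ C : Set W, IsCompact C → IsOpen C → w ∈ C → p ∈ T C) :
    w ∈ partitionOf T p := by
  intro U hU
  obtain ⟨q, B, hpq, hB, hwB, hBU⟩ := hA.exists_ge_mem_subset hbase hmono hwA hU
  have hqp : q ≤ p := by simpa [hB.2.2] using hw B hB.1 hB.2.1 hwB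
  obtain rfl := le_antisymm hpq hqp
  exact ⟨B, hB, hwB, hBU⟩

theorem IsTrimFor.exists_mem_partitionOf (hempty : T ∅ = ∅)
    (hunion : ∀ A B : Set W, IsCompact A → IsOpen A → IsCompact B → IsOpen B →
      T (A ∪ B) = T A ∪ T B)
    (hA : IsTrimFor T p A) : ∃ w ∈ A, w ∈ partitionOf T p := by
  have hmono := monotoneOn_of_union hunion
  obtain ⟨w, hwA, hw⟩ :
      ∃ w ∈ A, ∀ C : Set W, IsCompact C → IsOpen C → w ∈ C → p ∈ T C := by
    by_contra! hloc
    obtain ⟨C, hCc, hCo, hAC, hC⟩ := exists_superset_disjoint_type hempty hunion hA.1 (s := {p})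
      fun x hx =>
        let ⟨C, hCc, hCo, hxC, hpC⟩ := hloc x hx
        ⟨C, hCc, hCo, hxC, disjoint_singleton_right.2 hpC⟩
    exact disjoint_singleton_right.1 hC
      (hmono ⟨hA.1, hA.2.1⟩ ⟨hCc, hCo⟩ hAC (hA.2.2 ▸ self_mem_Ici))
  exact ⟨w, hwA, mem_partitionOf hbase hmono hA hwA hw⟩

theorem ptype_partitionOf (hempty : T ∅ = ∅)
    (hunion : ∀ A B : Set W, IsCompact A → IsOpen A → IsCompact B → IsOpen B →
      T (A ∪ B) = T A ∪ T B)
    (hsub : ∀ A : Set W, IsCompact A → IsOpen A → ∀ p ∈ T A,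
      ∃ B ⊆ A, IsCompact B ∧ IsOpen B ∧ T B = Ici p)
    (hAc : IsCompact A) (hAo : IsOpen A) : ptype (partitionOf T) A = T A := by
  ext q
  constructor
  · rintro ⟨w, hwA, hwq⟩
    obtain ⟨D, hD, hwD, hDA⟩ := hwq A (hAo.mem_nhds hwA)
    exact monotoneOn_of_union hunion ⟨hD.1, hD.2.1⟩ ⟨hAc, hAo⟩ hDA (hD.2.2 ▸ self_mem_Ici)
  · intro hq
    obtain ⟨B, hBA, hB⟩ := hsub A hAc hAo q hq
    obtain ⟨w, hwB, hw⟩ := IsTrimFor.exists_mem_partitionOf hbase hempty hunion hB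
    exact ⟨w, hBA hwB, hw⟩

theorem isTrimPartition_partitionOf
    (hlabel : ∀ p : P, ∃ A : Set W, IsCompact A ∧ IsOpen A ∧ p ∈ T A)
    (hptype : ∀ A : Set W, IsCompact A → IsOpen A → ptype (partitionOf T) A = T A) :
    IsTrimPartition (partitionOf T) := by
  have htrim := isTrimSet_eq_isTrimFor hptype
  have hclean :
      ∀ p, ∀ x ∈ partitionOf T p, ∃ A, IsTrimSet (partitionOf T) p A ∧ x ∈ A := by
    intro p x hx
    obtain ⟨A, hA, hxA, -⟩ := hx univ univ_mem
    exact ⟨A, htrim ▸ hA, hxA⟩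
  refine ⟨⟨fun p => ?_, pairwise_disjoint_of_forall_mem_isTrimSet hclean⟩, ?_, hclean, ?_⟩
  · obtain ⟨A, hAc, hAo, hpA⟩ := hlabel p
    rw [← hptype A hAc hAo] at hpA
    exact hpA.mono inter_subset_right
  · rw [htrim]
    exact hbase
  · rw [htrim]
    exact fun p w hw => hw

theorem iUnion_partitionOf_eq_univ [WellFoundedGT P]
    (hmono : MonotoneOn T {A | IsCompact A ∧ IsOpen A}) : ⋃ p, partitionOf T p = univ := by
  refine eq_univ_of_forall fun w => mem_iUnion.2 ?_
  obtain ⟨p, A, hA, hwA, -⟩ := hbase w univ univ_mem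
  obtain ⟨r, ⟨D, hD, hwD⟩, hmax⟩ :=
    wellFounded_gt.has_min {r | ∃ D, IsTrimFor T r D ∧ w ∈ D} ⟨p, A, hA, hwA⟩
  refine ⟨r, fun U hU => ?_⟩
  obtain ⟨q, B, hrq, hB, hwB, hBU⟩ := hD.exists_ge_mem_subset hbase hmono hwD hU
  obtain rfl : r = q := hrq.eq_of_not_lt (hmax q ⟨B, hB, hwB⟩)
  exact ⟨B, hB, hwB, hBU⟩

end Base

theorem exists_antitone_isTrimFor
    (hlabel : ∀ p : P, ∃ A : Set W, IsCompact A ∧ IsOpen A ∧ p ∈ T A)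
    (hsub : ∀ A : Set W, IsCompact A → IsOpen A → ∀ p ∈ T A,
      ∃ B ⊆ A, IsCompact B ∧ IsOpen B ∧ T B = Ici p)
    {f : ℕ → P} (hf : Monotone f) :
    ∃ A : ℕ → Set W, Antitone A ∧ ∀ n, IsTrimFor T (f n) (A n) := by
  obtain ⟨A₀, hA₀c, hA₀o, hA₀⟩ := hlabel (f 0)
  obtain ⟨B₀, -, hB₀⟩ := hsub A₀ hA₀c hA₀o (f 0) hA₀
  choose shrink hshrink_sub hshrink using fun n (A : {A // IsTrimFor T (f n) A}) =>
    hsub A.1 A.2.1 A.2.2.1 (f (n + 1)) (A.2.2.2 ▸ hf n.le_succ)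
  let seq : (n : ℕ) → {A // IsTrimFor T (f n) A} :=
    fun n => Nat.rec ⟨B₀, hB₀⟩ (fun n A => ⟨shrink n A, hshrink n A⟩) n
  exact ⟨fun n => (seq n).1, antitone_nat_of_succ_le fun n => hshrink_sub n (seq n),
    fun n => (seq n).2⟩

theorem not_strictMono_of_iUnion_partitionOf_eq_univ [T2Space W] (hempty : T ∅ = ∅)
    (hunion : ∀ A B : Set W, IsCompact A → IsOpen A → IsCompact B → IsOpen B →
      T (A ∪ B) = T A ∪ T B)
    (hlabel : ∀ p : P, ∃ A : Set W, IsCompact A ∧ IsOpen A ∧ p ∈ T A)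
    (hsub : ∀ A : Set W, IsCompact A → IsOpen A → ∀ p ∈ T A,
      ∃ B ⊆ A, IsCompact B ∧ IsOpen B ∧ T B = Ici p)
    (hcover : ⋃ p, partitionOf T p = univ) (f : ℕ → P) : ¬ StrictMono f := by
  intro hf
  have hmono := monotoneOn_of_union hunion
  obtain ⟨A, hAanti, hA⟩ := exists_antitone_isTrimFor hlabel hsub hf.monotone
  have hloc : ∀ x ∈ ⋂ n, A n,
      ∃ C : Set W, IsCompact C ∧ IsOpen C ∧ x ∈ C ∧ Disjoint (T C) (range f) := by
    intro x hx
    obtain ⟨q, hxq⟩ := mem_iUnion.1 (hcover ▸ mem_univ x)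
    obtain ⟨D, hD, hxD, -⟩ := hxq univ univ_mem
    have hfq : ∀ n, f n ≤ q := fun n =>
      let ⟨_, hD', _, hD'A⟩ := hxq (A n) ((hA n).2.1.mem_nhds (mem_iInter.1 hx n))
      (hA n).le_of_subset hmono hD' hD'A
    -- `q` bounds the strictly increasing chain, so no `f n` lies above `q`
    refine ⟨D, hD.1, hD.2.1, hxD, ?_⟩
    rw [hD.2.2]
    refine disjoint_right.2 ?_
    rintro _ ⟨n, rfl⟩ hqn
    exact (hf n.lt_succ_self).not_ge ((hfq (n + 1)).trans hqn)
  obtain ⟨C, hCc, hCo, hC, hCf⟩ := exists_superset_disjoint_type hempty hunion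
    ((hA 0).1.of_isClosed_subset (isClosed_iInter fun n => (hA n).1.isClosed) (iInter_subset A 0))
    hloc
  obtain ⟨n, hAC⟩ := exists_subset_nhds_of_isCompact hAanti.directed_ge (fun n => (hA n).1)
    fun x hx => hCo.mem_nhds (hC hx)
  have hfn : f n ∈ T C :=
    hmono ⟨(hA n).1, (hA n).2.1⟩ ⟨hCc, hCo⟩ hAC ((hA n).2.2 ▸ self_mem_Ici)
  exact disjoint_left.1 hCf hfn (mem_range_self n)

end TypeFunction

/-- (Type function theorem.) Let `W` be a Stone space and `T` a function on
the compact open sets of `W` with values in `2^P` satisfying conditions (1)–(5). Then there is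
a unique trim `P`-partition of `W` whose type function is `T`, and it is complete iff `P`
satisfies the ACC. -/
theorem trimPartition_of_typeFunction
    [LocallyCompactSpace W] [TotallyDisconnectedSpace W] [T2Space W]
    (T : Set W → Set P)
    (h1 : ∀ A : Set W, IsCompact A → IsOpen A → (T A = ∅ ↔ A = ∅))
    (h2 : ∀ p : P, ∃ A : Set W, IsCompact A ∧ IsOpen A ∧ p ∈ T A)
    (h3 : ∀ A B : Set W, IsCompact A → IsOpen A → IsCompact B → IsOpen B →
      T (A ∪ B) = T A ∪ T B)
    (h4 : ∀ A : Set W, IsCompact A → IsOpen A → ∀ p ∈ T A,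
      ∃ B ⊆ A, IsCompact B ∧ IsOpen B ∧ T B = Ici p)
    (h5 : ∀ A : Set W, IsCompact A → IsOpen A →
      ∃ (n : ℕ) (B : Fin n → Set W) (p : Fin n → P),
        (∀ i, IsCompact (B i) ∧ IsOpen (B i) ∧ T (B i) = Ici (p i)) ∧ A = ⋃ i, B i) :
    ∃ X : P → Set W,
      (IsTrimPartition X ∧ ∀ A : Set W, IsCompact A → IsOpen A → ptype X A = T A) ∧
      ((⋃ p, X p) = univ ↔ ∀ f : ℕ → P, ¬ StrictMono f) ∧
      ∀ Y : P → Set W, IsTrimPartition Y →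
        (∀ A : Set W, IsCompact A → IsOpen A → ptype Y A = T A) → Y = X := by
  have hempty : T ∅ = ∅ := (h1 ∅ isCompact_empty isOpen_empty).2 rfl
  have hbase : ∀ w : W, ∀ U ∈ 𝓝 w, ∃ p A, IsTrimFor T p A ∧ w ∈ A ∧ A ⊆ U :=
    fun _ _ hU => exists_isTrimFor_mem_subset h5 hU
  have hptype : ∀ A : Set W, IsCompact A → IsOpen A → ptype (partitionOf T) A = T A :=
    fun _ hAc hAo => ptype_partitionOf hbase hempty h3 h4 hAc hAo
  refine ⟨partitionOf T, ⟨isTrimPartition_partitionOf hbase h2 hptype, hptype⟩,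
    ⟨not_strictMono_of_iUnion_partitionOf_eq_univ hempty h3 h2 h4, fun hacc => ?_⟩,
    fun Y hY hYT => ?_⟩
  · have := wellFoundedGT_iff_forall_not_strictMono.2 hacc
    exact iUnion_partitionOf_eq_univ hbase (monotoneOn_of_union h3)
  · rw [hY.eq_nhdsBaseLocus, isTrimSet_eq_isTrimFor hYT]
    rfl
end

section
/- Let P be a poset and 𝒳 a semi-trim P-partition of an ω-Stone space W. Then: (A) 𝒳 can be regularly extended to a complete semi-trim P-partition of W if and only if every ascending sequence of elements of P̂ has a supremum in P; (B) 𝒳 can be regularly extended to a complete trim P-partition of W if and only if P satisfies the ascending chain condition. -/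
open Set

variable {P W : Type*} [PartialOrder P] [TopologicalSpace W]

/-!
Label a point `w` by the supremum of `trimLabels X w`, the labels of the trim sets containing it.
Trim sets form a neighbourhood base, so this set is directed, and a regular extension neither
removes trim sets of `X` nor changes the upper bounds of `trimLabels`; hence this canonical
completion is a semi-trim regular extension, complete exactly when all these suprema exist.
Along a nested trim neighbourhood base of `w` the labels form an ascending sequence in `P̂` with the
same upper bounds as `trimLabels X w`. Conversely, an ascending sequence `f` in `P̂` is realised by
nested `f n`-trim sets of shrinking diameter, which close down on a point `x` by compactness; in any
complete regular semi-trim extension, the label of `x` is then the supremum of `f`.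
Under ACC the directed set `trimLabels X w` has a greatest element, so every point is clean. If
instead `f` is strictly increasing and the extension is trim, the label `q` of `x` has a trim
neighbourhood of `x`, which contains some `f n`-trim set: `f (n + 1) ≤ q ≤ f n`.
-/

open Filter Topology

lemma exists_seq_of_exists_succ {α : Type*} (Q : ℕ → α → Prop) (R : ℕ → α → α → Prop)
    (h₀ : ∃ a, Q 0 a) (step : ∀ n a, Q n a → ∃ b, Q (n + 1) b ∧ R n a b) :
    ∃ f : ℕ → α, (∀ n, Q n (f n)) ∧ ∀ n, R n (f n) (f (n + 1)) := by
  obtain ⟨a₀, ha₀⟩ := h₀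
  choose g hgQ hgR using step
  let f : ∀ n, {a // Q n a} := fun n => Nat.rec ⟨a₀, ha₀⟩ (fun n a => ⟨g n a a.2, hgQ n a a.2⟩) n
  exact ⟨fun n => (f n).1, fun n => (f n).2, fun n => hgR n (f n).1 (f n).2⟩

lemma wellFoundedGT_of_forall_not_strictMono {α : Type*} [Preorder α]
    (h : ∀ f : ℕ → α, ¬ StrictMono f) : WellFoundedGT α :=
  ⟨RelEmbedding.wellFounded_iff_isEmpty.2 ⟨fun e => h e fun _ _ hmn => e.map_rel_iff.2 hmn⟩⟩

lemma DirectedOn.exists_isGreatest_of_wellFoundedGT {α : Type*} [PartialOrder α]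
    [WellFoundedGT α] {s : Set α} (hs : DirectedOn (· ≤ ·) s) (hne : s.Nonempty) :
    ∃ a, IsGreatest s a := by
  obtain ⟨a, ha, hmax⟩ := exists_maximal_of_wellFoundedGT (· ∈ s) hne
  refine ⟨a, ha, fun b hb => ?_⟩
  obtain ⟨c, hc, hac, hbc⟩ := hs a ha b hb
  exact hbc.trans (hmax hc hac)

lemma Monotone.exists_isLUB_range_of_wellFoundedGT {α : Type*} [PartialOrder α]
    [WellFoundedGT α] {f : ℕ → α} (hf : Monotone f) : ∃ q, IsLUB (range f) q :=
  let ⟨q, hq⟩ := hf.directed_le.directedOn_range.exists_isGreatest_of_wellFoundedGT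
    (range_nonempty f)
  ⟨q, hq.isLUB⟩

lemma hasAntitoneBasis_nhds_of_forall_isOpen {C : ℕ → Set W} {w : W}
    (hC : ∀ n, IsOpen (C n)) (hw : ∀ n, w ∈ C n) (hanti : Antitone C)
    (hsmall : ∀ U ∈ 𝓝 w, ∃ n, C n ⊆ U) : (𝓝 w).HasAntitoneBasis C where
  mem_iff' U := ⟨fun hU => let ⟨n, hn⟩ := hsmall U hU; ⟨n, trivial, hn⟩,
    fun ⟨n, _, hn⟩ => mem_of_superset ((hC n).mem_nhds (hw n)) hn⟩
  antitone := hanti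

section TrimSets

variable {X Y : P → Set W} {p q r : P} {A B : Set W} {w : W}

omit [PartialOrder P] [TopologicalSpace W] in
lemma ptype_mono : Monotone (ptype X) :=
  fun _ _ h _ ⟨x, hxA, hxp⟩ => ⟨x, h hxA, hxp⟩

namespace IsTrimSet

lemma mem_ptype (hA : IsTrimSet X p A) : p ∈ ptype X A := by
  rw [hA.2.2]
  exact self_mem_Ici

lemma le_of_mem_ptype (hA : IsTrimSet X p A) (hq : q ∈ ptype X A) : p ≤ q := by
  rwa [hA.2.2] at hq

lemma le_of_subset (hA : IsTrimSet X p A) (hB : IsTrimSet X r B) (hBA : B ⊆ A) : p ≤ r :=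
  hA.le_of_mem_ptype (ptype_mono hBA hB.mem_ptype)

lemma mem_nhds (hA : IsTrimSet X p A) (hw : w ∈ A) : A ∈ 𝓝 w :=
  hA.2.1.mem_nhds hw

end IsTrimSet

/-- For `x ∈ X p`, the field `label_sup` of `IsSemiTrim` reads `IsLUB (trimLabels X x) p`. -/
def trimLabels (X : P → Set W) (w : W) : Set P :=
  {q | ∃ A, IsTrimSet X q A ∧ w ∈ A}

lemma monotone_of_antitone_of_isTrimSet {C : ℕ → Set W} {f : ℕ → P}
    (hC : ∀ n, IsTrimSet X (f n) (C n)) (hanti : Antitone C) : Monotone f :=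
  fun _ _ hmn => (hC _).le_of_subset (hC _) (hanti hmn)

lemma isCofinalFor_trimLabels_range {C : ℕ → Set W} {f : ℕ → P}
    (hC : ∀ n, IsTrimSet X (f n) (C n)) (hw : (𝓝 w).HasBasis (fun _ => True) C) :
    IsCofinalFor (trimLabels X w) (range f) := by
  rintro r ⟨A, hA, hwA⟩
  obtain ⟨n, -, hn⟩ := hw.mem_iff.1 (hA.mem_nhds hwA)
  exact ⟨f n, mem_range_self n, hA.le_of_subset (hC n) hn⟩

lemma isLUB_trimLabels_iff_of_hasBasis {C : ℕ → Set W} {f : ℕ → P}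
    (hC : ∀ n, IsTrimSet X (f n) (C n)) (hw : (𝓝 w).HasBasis (fun _ => True) C) :
    IsLUB (trimLabels X w) q ↔ IsLUB (range f) q := by
  have hsub : range f ⊆ trimLabels X w := by
    rintro _ ⟨n, rfl⟩
    exact ⟨C n, hC n, mem_of_mem_nhds (hw.mem_of_mem trivial)⟩
  exact isLUB_congr ((upperBounds_mono_set hsub).antisymm
    (upperBounds_mono_of_isCofinalFor (isCofinalFor_trimLabels_range hC hw)))

lemma isGreatest_trimLabels_of_forall_nhds
    (h : ∀ U ∈ 𝓝 w, ∃ A, IsTrimSet X p A ∧ w ∈ A ∧ A ⊆ U) : IsGreatest (trimLabels X w) p := by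
  obtain ⟨A, hA, hwA, -⟩ := h univ univ_mem
  refine ⟨⟨A, hA, hwA⟩, ?_⟩
  rintro r ⟨B, hB, hwB⟩
  obtain ⟨A', hA', -, hA'B⟩ := h B (hB.mem_nhds hwB)
  exact hB.le_of_subset hA' hA'B

structure IsRegularExtension (X Y : P → Set W) : Prop where
  subset : ∀ p, X p ⊆ Y p
  le_of_inter_nonempty : ∀ (A : Set W) (p q : P), IsTrimSet X p A → (A ∩ Y q).Nonempty → p ≤ q

namespace IsRegularExtension

lemma isTrimSet (hXY : IsRegularExtension X Y) (hA : IsTrimSet X p A) : IsTrimSet Y p A := by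
  refine ⟨hA.1, hA.2.1, subset_antisymm (fun q hq => hXY.le_of_inter_nonempty A p q hA hq) ?_⟩
  intro q hq
  obtain ⟨x, hxA, hxq⟩ : q ∈ ptype X A := by rwa [hA.2.2]
  exact ⟨x, hxA, hXY.subset q hxq⟩

lemma trimLabels_subset (hXY : IsRegularExtension X Y) (w : W) :
    trimLabels X w ⊆ trimLabels Y w :=
  fun _ ⟨A, hA, hwA⟩ => ⟨A, hXY.isTrimSet hA, hwA⟩

end IsRegularExtension

namespace IsSemiTrim

lemma trimLabels_nonempty (hX : IsSemiTrim X) (w : W) : (trimLabels X w).Nonempty :=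
  let ⟨p, A, hA, hwA, _⟩ := hX.nhds_base w univ univ_mem
  ⟨p, A, hA, hwA⟩

lemma directedOn_trimLabels (hX : IsSemiTrim X) (w : W) :
    DirectedOn (· ≤ ·) (trimLabels X w) := by
  rintro r ⟨A, hA, hwA⟩ s ⟨B, hB, hwB⟩
  obtain ⟨t, C, hC, hwC, hCAB⟩ :=
    hX.nhds_base w (A ∩ B) (inter_mem (hA.mem_nhds hwA) (hB.mem_nhds hwB))
  exact ⟨t, ⟨C, hC, hwC⟩, hA.le_of_subset hC (hCAB.trans inter_subset_left),
    hB.le_of_subset hC (hCAB.trans inter_subset_right)⟩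

lemma isCofinalFor_trimLabels (hX : IsSemiTrim X) (hXY : IsRegularExtension X Y) (w : W) :
    IsCofinalFor (trimLabels Y w) (trimLabels X w) := by
  rintro q ⟨C, hC, hwC⟩
  obtain ⟨r, B, hB, hwB, hBC⟩ := hX.nhds_base w C (hC.mem_nhds hwC)
  exact ⟨r, ⟨B, hB, hwB⟩, hC.le_of_subset (hXY.isTrimSet hB) hBC⟩

lemma isLUB_trimLabels_iff (hX : IsSemiTrim X) (hXY : IsRegularExtension X Y) :
    IsLUB (trimLabels Y w) p ↔ IsLUB (trimLabels X w) p :=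
  isLUB_congr ((upperBounds_mono_set (hXY.trimLabels_subset w)).antisymm
    (upperBounds_mono_of_isCofinalFor (hX.isCofinalFor_trimLabels hXY w)))

lemma regularSpace [T2Space W] (hX : IsSemiTrim X) : RegularSpace W :=
  .of_exists_mem_nhds_isClosed_subset fun w U hU =>
    let ⟨_, A, hA, hwA, hAU⟩ := hX.nhds_base w U hU
    ⟨A, hA.mem_nhds hwA, hA.1.isClosed, hAU⟩

lemma exists_hasAntitoneBasis_trimSets [FirstCountableTopology W] (hX : IsSemiTrim X) (w : W) :
    ∃ (C : ℕ → Set W) (t : ℕ → P), (∀ n, IsTrimSet X (t n) (C n)) ∧ (𝓝 w).HasAntitoneBasis C := by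
  obtain ⟨U, hU⟩ := (𝓝 w).exists_antitone_basis
  have step : ∀ n A, ((∃ t, IsTrimSet X t A) ∧ w ∈ A ∧ A ⊆ U n) →
      ∃ B, ((∃ t, IsTrimSet X t B) ∧ w ∈ B ∧ B ⊆ U (n + 1)) ∧ B ⊆ A := by
    rintro n A ⟨⟨t, hA⟩, hwA, -⟩
    obtain ⟨s, B, hB, hwB, hBA⟩ :=
      hX.nhds_base w _ (inter_mem (hA.mem_nhds hwA) (hU.mem (n + 1)))
    exact ⟨B, ⟨⟨s, hB⟩, hwB, hBA.trans inter_subset_right⟩, hBA.trans inter_subset_left⟩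
  obtain ⟨C, hC, hCsucc⟩ := exists_seq_of_exists_succ _ (fun _ A B => B ⊆ A)
    (let ⟨t, A, hA, hwA, hAU⟩ := hX.nhds_base w (U 0) (hU.mem 0); ⟨A, ⟨t, hA⟩, hwA, hAU⟩) step
  choose t ht using fun n => (hC n).1
  refine ⟨C, t, ht, hasAntitoneBasis_nhds_of_forall_isOpen (fun n => (ht n).2.1)
    (fun n => (hC n).2.1) (antitone_nat_of_succ_le hCsucc) fun V hV => ?_⟩
  obtain ⟨n, hn⟩ := hU.mem_iff.1 hV
  exact ⟨n, (hC n).2.2.trans hn⟩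

lemma exists_hasAntitoneBasis_trimSets_of_monotone [T2Space W] [SecondCountableTopology W]
    (hX : IsSemiTrim X) {f : ℕ → P} (hf : Monotone f) (hfX : ∀ n, f n ∈ trimHat X) :
    ∃ (C : ℕ → Set W) (x : W), (∀ n, IsTrimSet X (f n) (C n)) ∧ (𝓝 x).HasAntitoneBasis C := by
  have := hX.regularSpace
  let : MetricSpace W := TopologicalSpace.metrizableSpaceMetric W
  have step : ∀ n A, IsTrimSet X (f n) A →
      ∃ B, IsTrimSet X (f (n + 1)) B ∧ B ⊆ A ∧ ∃ y, B ⊆ Metric.ball y (1 / (n + 1)) := by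
    intro n A hA
    obtain ⟨y, hyA, hy⟩ : f (n + 1) ∈ ptype X A := by rw [hA.2.2]; exact hf n.le_succ
    obtain ⟨B, hBA, hB⟩ := hX.trim_dense _ (hA.2.1.inter Metric.isOpen_ball) (f (n + 1))
      ⟨⟨y, ⟨hyA, Metric.mem_ball_self Nat.one_div_pos_of_nat⟩, hy⟩, hfX (n + 1)⟩
    exact ⟨B, hB, hBA.trans inter_subset_left, y, hBA.trans inter_subset_right⟩
  obtain ⟨C, hC, hCsucc⟩ :=
    exists_seq_of_exists_succ (fun n A => IsTrimSet X (f n) A) _ (hfX 0) step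
  obtain ⟨x, hx⟩ := IsCompact.nonempty_iInter_of_sequence_nonempty_isCompact_isClosed C
    (fun n => (hCsucc n).1) (fun n => (hC n).mem_ptype.mono inter_subset_left) (hC 0).1
    (fun n => (hC n).1.isClosed)
  rw [mem_iInter] at hx
  refine ⟨C, x, hC, hasAntitoneBasis_nhds_of_forall_isOpen (fun n => (hC n).2.1) hx
    (antitone_nat_of_succ_le fun n => (hCsucc n).1) fun V hV => ?_⟩
  obtain ⟨ε, hε, hεV⟩ := Metric.mem_nhds_iff.1 hV
  obtain ⟨n, hn⟩ := exists_nat_one_div_lt (half_pos hε)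
  obtain ⟨y, hy⟩ := (hCsucc n).2
  have hxy : dist y x < 1 / (n + 1) := by
    rw [dist_comm]
    exact hy (hx (n + 1))
  refine ⟨n + 1, hy.trans ((Metric.ball_subset_ball' ?_).trans hεV)⟩
  linarith

end IsSemiTrim

end TrimSets

section CanonicalCompletion

variable {X Y : P → Set W} {p : P} {w : W}

def canonicalCompletion (X : P → Set W) (p : P) : Set W :=
  {w | IsLUB (trimLabels X w) p}

namespace IsSemiTrim

lemma isRegularExtension_canonicalCompletion (hX : IsSemiTrim X) :
    IsRegularExtension X (canonicalCompletion X) :=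
  ⟨hX.label_sup, fun A _ _ hA ⟨_, hwA, hw⟩ => hw.1 ⟨A, hA, hwA⟩⟩

lemma ptype_canonicalCompletion_subset (hX : IsSemiTrim X) {A : Set W} (hA : IsOpen A) :
    ptype (canonicalCompletion X) A ⊆ ptype X A := by
  rintro p ⟨w, hwA, hw⟩
  obtain ⟨r, B, hB, hwB, hBA⟩ := hX.nhds_base w A (hA.mem_nhds hwA)
  have hrp : r ≤ p := hw.1 ⟨B, hB, hwB⟩
  exact ptype_mono hBA (by rwa [hB.2.2])

lemma trimHat_canonicalCompletion_subset (hX : IsSemiTrim X) :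
    trimHat (canonicalCompletion X) ⊆ trimHat X := by
  rintro p ⟨C, hC⟩
  obtain ⟨w, hwC, hw⟩ := hC.mem_ptype
  obtain ⟨r, B, hB, hwB, hBC⟩ := hX.nhds_base w C (hC.mem_nhds hwC)
  have hrp : r ≤ p := hw.1 ⟨B, hB, hwB⟩
  have hpr : p ≤ r :=
    hC.le_of_subset (hX.isRegularExtension_canonicalCompletion.isTrimSet hB) hBC
  exact ⟨B, le_antisymm hrp hpr ▸ hB⟩

lemma isSemiTrim_canonicalCompletion (hX : IsSemiTrim X) : IsSemiTrim (canonicalCompletion X) := by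
  have hXY := hX.isRegularExtension_canonicalCompletion
  refine ⟨⟨fun p => (hX.nonempty p).mono (hXY.subset p), fun p q hpq => ?_⟩, ?_, ?_, ?_, ?_⟩
  · exact disjoint_left.2 fun w hp hq => hpq (hp.unique hq)
  · intro w U hU
    obtain ⟨p, A, hA, hwA, hAU⟩ := hX.nhds_base w U hU
    exact ⟨p, A, hXY.isTrimSet hA, hwA, hAU⟩
  · rintro A hA p ⟨hpA, hp⟩
    obtain ⟨B, hBA, hB⟩ := hX.trim_dense A hA p
      ⟨hX.ptype_canonicalCompletion_subset hA hpA, hX.trimHat_canonicalCompletion_subset hp⟩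
    exact ⟨B, hBA, hXY.isTrimSet hB⟩
  · exact fun p x hx => (hX.isLUB_trimLabels_iff hXY).2 hx
  · exact fun p w h =>
      (hX.isLUB_trimLabels_iff hXY).1 (isGreatest_trimLabels_of_forall_nhds h).isLUB

lemma iUnion_canonicalCompletion [FirstCountableTopology W] (hX : IsSemiTrim X)
    (hsup : ∀ f : ℕ → P, Monotone f → (∀ n, f n ∈ trimHat X) → ∃ q, IsLUB (range f) q) :
    ⋃ p, canonicalCompletion X p = univ := by
  refine eq_univ_of_forall fun w => mem_iUnion.2 ?_
  obtain ⟨C, t, hC, hw⟩ := hX.exists_hasAntitoneBasis_trimSets w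
  obtain ⟨q, hq⟩ :=
    hsup t (monotone_of_antitone_of_isTrimSet hC hw.antitone) fun n => ⟨C n, hC n⟩
  exact ⟨q, (isLUB_trimLabels_iff_of_hasBasis hC hw.toHasBasis).2 hq⟩

lemma exists_isTrimSet_canonicalCompletion [WellFoundedGT P] (hX : IsSemiTrim X)
    (hw : w ∈ canonicalCompletion X p) : ∃ A, IsTrimSet (canonicalCompletion X) p A ∧ w ∈ A := by
  obtain ⟨g, hg⟩ := (hX.directedOn_trimLabels w).exists_isGreatest_of_wellFoundedGT
    (hX.trimLabels_nonempty w)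
  obtain ⟨A, hA, hwA⟩ := hg.isLUB.unique hw ▸ hg.1
  exact ⟨A, hX.isRegularExtension_canonicalCompletion.isTrimSet hA, hwA⟩

lemma exists_isLUB_range_of_isRegularExtension [T2Space W] [SecondCountableTopology W]
    (hX : IsSemiTrim X) (hY : IsSemiTrim Y) (hYcov : ⋃ p, Y p = univ)
    (hXY : IsRegularExtension X Y) {f : ℕ → P} (hf : Monotone f) (hfX : ∀ n, f n ∈ trimHat X) :
    ∃ q, IsLUB (range f) q := by
  obtain ⟨C, x, hC, hx⟩ := hX.exists_hasAntitoneBasis_trimSets_of_monotone hf hfX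
  obtain ⟨q, hq⟩ := mem_iUnion.1 (hYcov ▸ mem_univ x)
  exact ⟨q, (isLUB_trimLabels_iff_of_hasBasis hC hx.toHasBasis).1
    ((hX.isLUB_trimLabels_iff hXY).1 (hY.label_sup q x hq))⟩

lemma not_strictMono_of_forall_clean [T2Space W] [SecondCountableTopology W]
    (hY : IsSemiTrim Y) (hYcov : ⋃ p, Y p = univ)
    (hclean : ∀ p, ∀ x ∈ Y p, ∃ A, IsTrimSet Y p A ∧ x ∈ A) (f : ℕ → P) : ¬ StrictMono f := by
  intro hf
  have hfY (n : ℕ) : f n ∈ trimHat Y :=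
    let ⟨x, hx⟩ := hY.nonempty (f n)
    let ⟨A, hA, _⟩ := hclean (f n) x hx
    ⟨A, hA⟩
  obtain ⟨C, x, hC, hx⟩ := hY.exists_hasAntitoneBasis_trimSets_of_monotone hf.monotone hfY
  obtain ⟨q, hq⟩ := mem_iUnion.1 (hYcov ▸ mem_univ x)
  have hlub : IsLUB (range f) q :=
    (isLUB_trimLabels_iff_of_hasBasis hC hx.toHasBasis).1 (hY.label_sup q x hq)
  obtain ⟨_, ⟨n, rfl⟩, hqn⟩ := isCofinalFor_trimLabels_range hC hx.toHasBasis (hclean q x hq)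
  exact (hf n.lt_succ_self).not_ge ((hlub.1 (mem_range_self (n + 1))).trans hqn)

end IsSemiTrim

end CanonicalCompletion

theorem completion_iff_general
    [T2Space W] [SecondCountableTopology W]
    (X : P → Set W) (hX : IsSemiTrim X) :
    ((∃ Y : P → Set W, IsSemiTrim Y ∧ (⋃ p, Y p) = univ ∧ (∀ p, X p ⊆ Y p) ∧
        (∀ (A : Set W) (p q : P),
          IsTrimSet X p A → (A ∩ Y q).Nonempty → p ≤ q)) ↔
      (∀ f : ℕ → P, Monotone f → (∀ n, f n ∈ trimHat X) → ∃ q : P, IsLUB (range f) q)) ∧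
    ((∃ Y : P → Set W, IsSemiTrim Y ∧ (⋃ p, Y p) = univ ∧
        (∀ p, ∀ x ∈ Y p, ∃ A, IsTrimSet Y p A ∧ x ∈ A) ∧ (∀ p, X p ⊆ Y p) ∧
        (∀ (A : Set W) (p q : P),
          IsTrimSet X p A → (A ∩ Y q).Nonempty → p ≤ q)) ↔
      (∀ f : ℕ → P, ¬ StrictMono f)) := by
  have hXY := hX.isRegularExtension_canonicalCompletion
  refine ⟨⟨?_, fun hsup => ?_⟩, ⟨?_, fun hacc => ?_⟩⟩
  · rintro ⟨Y, hY, hYcov, hsub, hreg⟩ f hf hfX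
    exact hX.exists_isLUB_range_of_isRegularExtension hY hYcov ⟨hsub, hreg⟩ hf hfX
  · exact ⟨_, hX.isSemiTrim_canonicalCompletion, hX.iUnion_canonicalCompletion hsup, hXY.subset,
      hXY.le_of_inter_nonempty⟩
  · rintro ⟨Y, hY, hYcov, hclean, -⟩
    exact hY.not_strictMono_of_forall_clean hYcov hclean
  · have := wellFoundedGT_of_forall_not_strictMono hacc
    exact ⟨_, hX.isSemiTrim_canonicalCompletion,
      hX.iUnion_canonicalCompletion fun f hf _ => hf.exists_isLUB_range_of_wellFoundedGT,
      fun p w hw => hX.exists_isTrimSet_canonicalCompletion hw, hXY.subset,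
      hXY.le_of_inter_nonempty⟩

/-- Let `𝒳` be a semi-trim `P`-partition of an ω-Stone space `W`.
(A) `𝒳` can be regularly extended to a complete semi-trim `P`-partition of `W` iff every
ascending sequence of elements of `P̂` has a supremum in `P`; (B) `𝒳` can be regularly
extended to a complete trim `P`-partition of `W` iff `P` satisfies the ACC. -/
theorem completion_iff
    [LocallyCompactSpace W] [TotallyDisconnectedSpace W] [T2Space W]
    [SecondCountableTopology W]
    (X : P → Set W) (hX : IsSemiTrim X) :
    ((∃ Y : P → Set W, IsSemiTrim Y ∧ (⋃ p, Y p) = univ ∧ (∀ p, X p ⊆ Y p) ∧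
        (∀ (A : Set W) (p q : P),
          IsTrimSet X p A → (A ∩ Y q).Nonempty → p ≤ q)) ↔
      (∀ f : ℕ → P, Monotone f → (∀ n, f n ∈ trimHat X) → ∃ q : P, IsLUB (range f) q)) ∧
    ((∃ Y : P → Set W, IsSemiTrim Y ∧ (⋃ p, Y p) = univ ∧
        (∀ p, ∀ x ∈ Y p, ∃ A, IsTrimSet Y p A ∧ x ∈ A) ∧ (∀ p, X p ⊆ Y p) ∧
        (∀ (A : Set W) (p q : P),
          IsTrimSet X p A → (A ∩ Y q).Nonempty → p ≤ q)) ↔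
      (∀ f : ℕ → P, ¬ StrictMono f)) :=
  completion_iff_general X hX
end

section
/- Let P be a countable poset. Then: (i) there is an ω-Stone space that admits a trim P-partition; (ii) there is an ω-Stone space that admits a good P-partition if and only if P is ω-complete; (iii) there is an ω-Stone space that admits a complete semi-trim P-partition if and only if P is ω-complete; (iv) there is an ω-Stone space that admits a complete trim P-partition if and only if P satisfies the ascending chain condition. -/
set_option linter.unusedSectionVars false
set_option linter.unusedVariables false
set_option maxHeartbeats 1000000

open Set

variable {P W : Type*} [PartialOrder P] [TopologicalSpace W]

/-- A second countable Stone space (ω-Stone space). -/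
def IsOmegaStone (W : Type) [TopologicalSpace W] : Prop :=
  LocallyCompactSpace W ∧ TotallyDisconnectedSpace W ∧ T2Space W ∧
    SecondCountableTopology W

/-! ### Abstract lemmas about semi-trim partitions -/

theorem ptype_mono_s16 {X : P → Set W} {A B : Set W} (h : A ⊆ B) : ptype X A ⊆ ptype X B :=
  fun _ ⟨x, hx, hxp⟩ => ⟨x, h hx, hxp⟩

theorem le_of_trim_mem {X : P → Set W} {p q : P} {A : Set W} {x : W}
    (hA : IsTrimSet X q A) (hxA : x ∈ A) (hxp : x ∈ X p) : q ≤ p := by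
  have : p ∈ ptype X A := ⟨x, hxA, hxp⟩
  rw [hA.2.2] at this; exact this

theorem label_eq {X : P → Set W} (hP : IsPPartition X) {p q : P} {x : W}
    (hp : x ∈ X p) (hq : x ∈ X q) : p = q := by
  by_contra hne
  exact (hP.pairwise_disjoint hne).ne_of_mem hp hq rfl

theorem subset_closure_of_le {X : P → Set W} (hst : IsSemiTrim X) {q u : P} (h : q ≤ u) :
    X q ⊆ closure (X u) := by
  intro x hx
  rw [mem_closure_iff]
  intro o ho hxo
  obtain ⟨t, A, hA, hxA, hAo⟩ := hst.nhds_base x o (ho.mem_nhds hxo)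
  have htu : t ≤ u := (le_of_trim_mem hA hxA hx).trans h
  have : u ∈ ptype X A := by rw [hA.2.2]; exact htu
  obtain ⟨y, hyA, hyu⟩ := this
  exact ⟨y, hAo hyA, hyu⟩

theorem le_of_mem_closure {X : P → Set W} (hst : IsSemiTrim X) {q u : P} {x : W}
    (hx : x ∈ X q) (hcl : x ∈ closure (X u)) : q ≤ u := by
  have hlub := hst.label_sup q x hx
  refine hlub.2 ?_
  intro t ⟨A, hA, hxA⟩
  have h1 : (A ∩ X u).Nonempty := by
    rw [mem_closure_iff] at hcl
    exact hcl A hA.2.1 hxA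
  have h2 : u ∈ ptype X A := h1
  rw [hA.2.2] at h2; exact h2

theorem semiTrim_good {X : P → Set W} (hst : IsSemiTrim X) (hcompl : (⋃ p, X p) = univ) :
    ∀ p, closure (X p) = ⋃ q, ⋃ _ : q ≤ p, X q := by
  intro p
  apply Subset.antisymm
  · intro y hy
    have : y ∈ ⋃ r, X r := hcompl ▸ mem_univ y
    obtain ⟨r, hr⟩ := mem_iUnion.1 this
    exact mem_iUnion.2 ⟨r, mem_iUnion.2 ⟨le_of_mem_closure hst hr hy, hr⟩⟩
  · intro y hy
    obtain ⟨q, hq⟩ := mem_iUnion.1 hy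
    obtain ⟨hqp, hyq⟩ := mem_iUnion.1 hq
    exact subset_closure_of_le hst hqp hyq

theorem clean_basis {X : P → Set W} (hst : IsSemiTrim X) {p : P} {x : W} {A : Set W}
    (hx : x ∈ X p) (hA : IsTrimSet X p A) (hxA : x ∈ A) :
    ∀ U ∈ nhds x, ∃ B, IsTrimSet X p B ∧ x ∈ B ∧ B ⊆ U := by
  intro U hU
  have hUA : U ∩ A ∈ nhds x := Filter.inter_mem hU (hA.2.1.mem_nhds hxA)
  obtain ⟨q, B, hB, hxB, hBsub⟩ := hst.nhds_base x _ hUA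
  have hqp : q ≤ p := le_of_trim_mem hB hxB hx
  have hpq : p ≤ q := by
    have h1 : ptype X B ⊆ ptype X A := ptype_mono_s16 (hBsub.trans inter_subset_right)
    rw [hB.2.2, hA.2.2] at h1
    exact h1 self_mem_Ici
  cases le_antisymm hqp hpq
  exact ⟨B, hB, hxB, hBsub.trans inter_subset_left⟩

/-! ### The Baire-category argument -/

theorem good_to_omegaComplete [Countable P] {W0 : Type} [TopologicalSpace W0]
    (hLC : LocallyCompactSpace W0) (hT2 : T2Space W0)
    {X : P → Set W0} (hne : ∀ p, (X p).Nonempty) (hcompl : (⋃ p, X p) = univ)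
    (hup : ∀ q u : P, q ≤ u → X q ⊆ closure (X u))
    (hdown : ∀ q u : P, ∀ x : W0, x ∈ X q → x ∈ closure (X u) → q ≤ u) :
    ∀ f : ℕ → P, Monotone f → ∃ q : P, IsLUB (range f) q := by
  intro f hf
  classical
  haveI := hLC; haveI := hT2
  set E : Set W0 := ⋃ q, ⋃ _ : ∃ i, q ≤ f i, X q with hE
  have hsubE : ∀ q, (∃ i, q ≤ f i) → X q ⊆ E := fun q h =>
    subset_iUnion_of_subset q (subset_iUnion_of_subset h Subset.rfl)
  set F : Set W0 := closure E with hF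
  have hFc : IsClosed F := isClosed_closure
  have hEF : E ⊆ F := subset_closure
  obtain ⟨x₁, hx₁⟩ := hne (f 0)
  have hx₁E : x₁ ∈ E := hsubE (f 0) ⟨0, le_rfl⟩ hx₁
  haveI : Nonempty F := ⟨⟨x₁, hEF hx₁E⟩⟩
  haveI : LocallyCompactSpace F := hFc.locallyCompactSpace
  set C : P → Set F := fun r => closure (Subtype.val ⁻¹' (X r)) with hC
  have hcover : (⋃ r : P, C r) = univ := by
    apply eq_univ_of_forall
    intro y
    have : (y : W0) ∈ ⋃ p, X p := hcompl ▸ mem_univ _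
    obtain ⟨r, hr⟩ := mem_iUnion.1 this
    exact mem_iUnion.2 ⟨r, subset_closure hr⟩
  obtain ⟨r, z, hz⟩ := nonempty_interior_of_iUnion_of_closed
    (fun r => isClosed_closure) hcover
  obtain ⟨O, hO, hOeq⟩ := isOpen_induced_iff.1 (isOpen_interior (s := C r))
  have hzO : (z : W0) ∈ O := by
    have : z ∈ Subtype.val ⁻¹' O := hOeq ▸ hz
    exact this
  have hkey : ∀ y : W0, ∀ hyF : y ∈ F, y ∈ O → y ∈ closure (X r) := by
    intro y hyF hyO
    have h1 : (⟨y, hyF⟩ : F) ∈ Subtype.val ⁻¹' O := hyO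
    rw [hOeq] at h1
    have h2 : (⟨y, hyF⟩ : F) ∈ C r := interior_subset h1
    exact Continuous.closure_preimage_subset continuous_subtype_val (X r) h2
  have hub : ∀ i, f i ≤ r := by
    intro i
    obtain ⟨x, hxO, hxE⟩ : (O ∩ E).Nonempty := by
      have hzE : (z : W0) ∈ closure E := z.2
      exact mem_closure_iff.1 hzE O hO hzO
    obtain ⟨q, hq⟩ := mem_iUnion.1 hxE
    obtain ⟨⟨j, hqj⟩, hxq⟩ := mem_iUnion.1 hq
    set k := max i j with hk
    have hqk : q ≤ f k := hqj.trans (hf (le_max_right i j))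
    have hxcl : x ∈ closure (X (f k)) := hup q (f k) hqk hxq
    obtain ⟨y, hyO, hyX⟩ : (O ∩ X (f k)).Nonempty := mem_closure_iff.1 hxcl O hO hxO
    have hyE : y ∈ E := hsubE (f k) ⟨k, le_rfl⟩ hyX
    have hycl : y ∈ closure (X r) := hkey y (hEF hyE) hyO
    have : f k ≤ r := hdown (f k) r y hyX hycl
    exact (hf (le_max_left i j)).trans this
  refine ⟨r, ?_, ?_⟩
  · rintro _ ⟨i, rfl⟩
    exact hub i
  · intro u hu
    have hCne : (Subtype.val ⁻¹' (X r) : Set F).Nonempty := by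
      rw [← closure_nonempty_iff]
      exact ⟨z, interior_subset hz⟩
    obtain ⟨w, hw⟩ := hCne
    have hFu : F ⊆ closure (X u) := by
      apply closure_minimal _ isClosed_closure
      apply iUnion₂_subset
      rintro q ⟨i, hqi⟩
      exact hup q u (hqi.trans (hu ⟨i, rfl⟩))
    exact hdown r u w hw (hFu w.2)

/-! ### The metric convergence argument for the ACC -/

theorem trim_to_acc [Countable P] {W0 : Type} [TopologicalSpace W0]
    (hLC : LocallyCompactSpace W0) (hT2 : T2Space W0) (hSC : SecondCountableTopology W0)
    {X : P → Set W0} (hst : IsSemiTrim X) (hcompl : (⋃ p, X p) = univ)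
    (hclean : ∀ p, ∀ x ∈ X p, ∃ A, IsTrimSet X p A ∧ x ∈ A) :
    ∀ f : ℕ → P, ¬ StrictMono f := by
  intro f hf
  haveI := hLC; haveI := hT2; haveI := hSC
  haveI : TopologicalSpace.MetrizableSpace W0 := inferInstance
  letI : MetricSpace W0 := TopologicalSpace.metrizableSpaceMetric W0
  have step : ∀ i : ℕ, ∀ x : W0, ∀ A : Set W0,
      x ∈ X (f i) → x ∈ A → IsTrimSet X (f i) A →
      ∃ y B, y ∈ X (f (i+1)) ∧ y ∈ B ∧ IsTrimSet X (f (i+1)) B ∧ B ⊆ A ∧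
        B ⊆ Metric.ball y ((1/2 : ℝ) ^ i) := by
    intro i x A hx hxA hA
    have hmem : f (i+1) ∈ ptype X A := by
      rw [hA.2.2]; exact (hf (Nat.lt_succ_self i)).le
    obtain ⟨y, hyA, hy⟩ := hmem
    obtain ⟨C, hC, hyC⟩ := hclean (f (i+1)) y hy
    have hball : A ∩ Metric.ball y ((1/2:ℝ)^i) ∈ nhds y :=
      Filter.inter_mem (hA.2.1.mem_nhds hyA) (Metric.ball_mem_nhds y (by positivity))
    obtain ⟨B, hB, hyB, hBsub⟩ := clean_basis hst hy hC hyC _ hball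
    exact ⟨y, B, hy, hyB, hB, hBsub.trans inter_subset_left,
      hBsub.trans inter_subset_right⟩
  let T : ℕ → Type _ := fun i =>
    {s : W0 × Set W0 // s.1 ∈ X (f i) ∧ s.1 ∈ s.2 ∧ IsTrimSet X (f i) s.2}
  have stepT : ∀ i (s : T i), ∃ t : T (i+1),
      t.1.2 ⊆ s.1.2 ∧ t.1.2 ⊆ Metric.ball t.1.1 ((1/2:ℝ)^i) := by
    rintro i ⟨⟨x, A⟩, hx, hxA, hA⟩
    obtain ⟨y, B, h1, h2, h3, h4, h5⟩ := step i x A hx hxA hA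
    exact ⟨⟨(y, B), h1, h2, h3⟩, h4, h5⟩
  choose nxt hnxt1 hnxt2 using stepT
  obtain ⟨x₀, hx₀⟩ := hst.nonempty (f 0)
  obtain ⟨A₀, hA₀, hx₀A⟩ := hclean (f 0) x₀ hx₀
  let g : ∀ i, T i := fun i =>
    Nat.rec (⟨(x₀, A₀), hx₀, hx₀A, hA₀⟩ : T 0) (fun i gi => nxt i gi) i
  set x : ℕ → W0 := fun i => (g i).1.1 with hxdef
  set A : ℕ → Set W0 := fun i => (g i).1.2 with hAdef
  have hxX : ∀ i, x i ∈ X (f i) := fun i => (g i).2.1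
  have hxA : ∀ i, x i ∈ A i := fun i => (g i).2.2.1
  have hAt : ∀ i, IsTrimSet X (f i) (A i) := fun i => (g i).2.2.2
  have hsub : ∀ i, A (i+1) ⊆ A i := fun i => hnxt1 i (g i)
  have hball : ∀ i, A (i+1) ⊆ Metric.ball (x (i+1)) ((1/2:ℝ)^i) := fun i => hnxt2 i (g i)
  obtain ⟨w, hw⟩ := IsCompact.nonempty_iInter_of_sequence_nonempty_isCompact_isClosed
    A hsub (fun i => ⟨x i, hxA i⟩) (hAt 0).1 (fun i => (hAt i).1.isClosed)
  have hwA : ∀ i, w ∈ A i := fun i => mem_iInter.1 hw i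
  obtain ⟨s, hws⟩ : ∃ s, w ∈ X s := mem_iUnion.1 (hcompl ▸ mem_univ w)
  have hge : ∀ i, f i ≤ s := fun i => le_of_trim_mem (hAt i) (hwA i) hws
  have htend : Filter.Tendsto x Filter.atTop (nhds w) := by
    rw [Metric.tendsto_atTop]
    intro ε hε
    obtain ⟨N, hN⟩ := exists_pow_lt_of_lt_one hε (by norm_num : (1/2:ℝ) < 1)
    refine ⟨N+1, fun n hn => ?_⟩
    obtain ⟨k, rfl⟩ : ∃ k, n = k + 1 := ⟨n - 1, by omega⟩
    have hk : N ≤ k := by omega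
    have h1 : dist (x (k+1)) w < (1/2:ℝ)^k := by
      have := hball k (hwA (k+1))
      rw [Metric.mem_ball] at this
      rwa [dist_comm] at this
    calc dist (x (k+1)) w < (1/2:ℝ)^k := h1
      _ ≤ (1/2:ℝ)^N := pow_le_pow_of_le_one (by norm_num) (by norm_num) hk
      _ < ε := hN
  obtain ⟨C, hC, hwC⟩ := hclean s w hws
  have hev : ∀ᶠ n in Filter.atTop, x n ∈ C :=
    htend.eventually_mem (hC.2.1.mem_nhds hwC)
  obtain ⟨N, hN⟩ := Filter.eventually_atTop.1 hev
  have h1 : s ≤ f N := by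
    have : f N ∈ ptype X C := ⟨x N, hN N le_rfl, hxX N⟩
    rw [hC.2.2] at this; exact this
  exact absurd ((h1.trans_lt (hf (Nat.lt_succ_self N))).trans_le (hge (N+1))) (lt_irrefl s)


/-! ### The tree space of chains -/

variable (Q : Type) [PartialOrder Q]

/-- Finite nonempty strictly increasing chains in `Q`, with multiplicities. -/
def TChain : Type :=
  {l : List (Q × ℕ) // l ≠ [] ∧ l.Chain' (fun a b => a.1 < b.1)}

instance [Countable Q] : Countable (TChain Q) := by
  unfold TChain; infer_instance

instance : IsTrans (Q × ℕ) (fun a b => a.1 < b.1) :=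
  ⟨fun _ _ _ h1 h2 => h1.trans h2⟩

namespace TChain

variable {Q}

/-- The last label of a chain. -/
def lastL (s : TChain Q) : Q := (s.1.getLast s.2.1).1

theorem lastL_lt_of_prefix_ne {t s : TChain Q} (h : t.1 <+: s.1) (hne : t ≠ s) :
    lastL t < lastL s := by
  have htpos : 0 < t.1.length := List.length_pos_iff.2 t.2.1
  have hlt : t.1.length < s.1.length := by
    refine lt_of_le_of_ne h.length_le (fun heq => hne ?_)
    exact Subtype.ext (h.eq_of_length heq)
  have hpw := List.isChain_iff_pairwise.1 s.2.2
  have hrel := (List.pairwise_iff_getElem.1 hpw) (t.1.length - 1) (s.1.length - 1)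
    (by omega) (by omega) (by omega)
  have h1 : t.1.getLast t.2.1 = t.1[t.1.length - 1]'(by omega) := List.getLast_eq_getElem _
  have h2 : s.1.getLast s.2.1 = s.1[s.1.length - 1]'(by omega) := List.getLast_eq_getElem _
  have h3 : t.1[t.1.length - 1]'(by omega) = s.1[t.1.length - 1]'(by omega) :=
    h.getElem (by omega)
  unfold lastL
  rw [h1, h2, h3]
  exact hrel

theorem lastL_le_of_prefix {t s : TChain Q} (h : t.1 <+: s.1) : lastL t ≤ lastL s := by
  rcases eq_or_ne t s with rfl | hne
  · exact le_rfl
  · exact (lastL_lt_of_prefix_ne h hne).le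

/-- Extending a chain by one element. -/
def concat (s : TChain Q) (q : Q) (m : ℕ) (hq : lastL s < q) : TChain Q :=
  ⟨s.1 ++ [(q, m)], by
    refine ⟨by simp, List.isChain_append.2 ⟨s.2.2, List.isChain_singleton _, ?_⟩⟩
    intro a ha b hb
    rw [List.getLast?_eq_getLast s.2.1, Option.mem_def, Option.some_inj] at ha
    simp only [List.head?_cons, Option.mem_def, Option.some_inj] at hb
    subst ha; subst hb
    exact hq⟩

theorem concat_lastL (s : TChain Q) (q : Q) (m : ℕ) (hq : lastL s < q) :
    lastL (concat s q m hq) = q := by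
  unfold lastL concat
  simp only
  simp [List.getLast_append]

theorem prefix_concat_self (s : TChain Q) (q : Q) (m : ℕ) (hq : lastL s < q) :
    s.1 <+: (concat s q m hq).1 := List.prefix_append _ _

theorem prefix_concat_cases {s : TChain Q} {q : Q} {m : ℕ} {hq : lastL s < q}
    {t : TChain Q} (h : t.1 <+: (concat s q m hq).1) : t.1 <+: s.1 ∨ t = concat s q m hq := by
  rcases le_or_gt t.1.length s.1.length with hle | hlt
  · exact Or.inl (List.prefix_of_prefix_length_le h (List.prefix_append _ _) hle)
  · right
    apply Subtype.ext
    apply h.eq_of_length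
    have h1 : (concat s q m hq).1.length = s.1.length + 1 := by
      show (s.1 ++ [(q, m)]).length = _; simp
    have h2 := h.length_le
    omega

theorem concat_ne (s : TChain Q) (q : Q) (m : ℕ) (hq : lastL s < q) :
    s ≠ concat s q m hq := by
  intro h
  have := congrArg (fun t : TChain Q => t.1.length) h
  simp only [concat, List.length_append, List.length_cons, List.length_nil] at this
  omega

theorem concat_injective (s : TChain Q) (q : Q) (hq : lastL s < q) :
    Function.Injective (fun m => concat s q m hq) := by
  intro m m' h
  have := congrArg (fun t : TChain Q => t.1) h
  simp only [concat] at this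
  have := List.append_cancel_left this
  simpa using this

end TChain

/-! ### The space -/

/-- The ambient product space. -/
abbrev TPt : Type := TChain Q → Bool

/-- Consistency conditions: the true chains are downward closed and pairwise comparable. -/
def GoodPt (x : TPt Q) : Prop :=
  (∀ s t : TChain Q, t.1 <+: s.1 → x s = true → x t = true) ∧
  (∀ s t : TChain Q, x s = true → x t = true → s.1 <+: t.1 ∨ t.1 <+: s.1)

def WSet : Set (TPt Q) := {x | GoodPt Q x ∧ ∃ s, x s = true}

abbrev WT : Type := ↥(WSet Q)

theorem isClosed_eval (s : TChain Q) (b : Bool) : IsClosed {y : TPt Q | y s = b} := by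
  have heq : {y : TPt Q | y s = b} = (fun y : TPt Q => y s) ⁻¹' {b} := rfl
  rw [heq]
  exact IsClosed.preimage (continuous_apply s) isClosed_singleton

theorem isOpen_eval (s : TChain Q) (b : Bool) : IsOpen {y : TPt Q | y s = b} := by
  have heq : {y : TPt Q | y s = b} = (fun y : TPt Q => y s) ⁻¹' {b} := rfl
  rw [heq]
  exact IsOpen.preimage (continuous_apply s) (isOpen_discrete _)

theorem isClosed_imp_eval (s t : TChain Q) (b : Bool) :
    IsClosed {y : TPt Q | y s = true → y t = b} := by
  have heq : {y : TPt Q | y s = true → y t = b} = {y | y s = false} ∪ {y | y t = b} := by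
    ext y
    simp only [mem_setOf_eq, mem_union]
    constructor
    · intro h
      cases hy : y s
      · exact Or.inl rfl
      · exact Or.inr (h hy)
    · rintro (h | h) hs
      · rw [hs] at h; cases h
      · exact h
  rw [heq]
  exact (isClosed_eval Q s false).union (isClosed_eval Q t b)

theorem isClosed_good : IsClosed {y : TPt Q | GoodPt Q y} := by
  have heq : {y : TPt Q | GoodPt Q y} =
      (⋂ (s : TChain Q) (t : TChain Q) (_ : t.1 <+: s.1), {y | y s = true → y t = true}) ∩
      (⋂ (s : TChain Q) (t : TChain Q) (_ : ¬(s.1 <+: t.1 ∨ t.1 <+: s.1)),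
        {y | y s = true → y t = false}) := by
    ext y
    simp only [mem_setOf_eq, mem_inter_iff, mem_iInter]
    constructor
    · rintro ⟨h1, h2⟩
      refine ⟨fun s t h => h1 s t h, fun s t h hs => ?_⟩
      cases hy : y t
      · rfl
      · exact absurd (h2 s t hs hy) h
    · rintro ⟨h1, h2⟩
      refine ⟨fun s t h => h1 s t h, fun s t hs ht => ?_⟩
      by_contra hcomp
      have := h2 s t hcomp hs
      rw [ht] at this
      cases this
  rw [heq]
  refine IsClosed.inter ?_ ?_
  · exact isClosed_iInter fun s => isClosed_iInter fun t => isClosed_iInter fun _ =>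
      isClosed_imp_eval Q s t true
  · exact isClosed_iInter fun s => isClosed_iInter fun t => isClosed_iInter fun _ =>
      isClosed_imp_eval Q s t false

/-- Basic compact open set: points through `s` avoiding the finite set `F`. -/
def Bset (s : TChain Q) (F : Finset (TChain Q)) : Set (WT Q) :=
  {x | x.1 s = true ∧ ∀ t ∈ F, x.1 t = false}

theorem isOpen_Bset (s : TChain Q) (F : Finset (TChain Q)) : IsOpen (Bset Q s F) := by
  have heq : Bset Q s F =
      (Subtype.val ⁻¹' {y : TPt Q | y s = true}) ∩
      ⋂ (t : TChain Q) (_ : t ∈ F), Subtype.val ⁻¹' {y : TPt Q | y t = false} := by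
    ext x
    simp only [Bset, mem_setOf_eq, mem_inter_iff, mem_preimage, mem_iInter]
  rw [heq]
  refine IsOpen.inter ((isOpen_eval Q s true).preimage continuous_subtype_val) ?_
  refine Set.Finite.isOpen_biInter F.finite_toSet ?_
  exact fun t _ => (isOpen_eval Q t false).preimage continuous_subtype_val

theorem val_image_Bset (s : TChain Q) (F : Finset (TChain Q)) :
    Subtype.val '' (Bset Q s F) =
      {y : TPt Q | GoodPt Q y} ∩ {y | y s = true ∧ ∀ t ∈ F, y t = false} := by
  ext y
  constructor
  · rintro ⟨x, ⟨hx1, hx2⟩, rfl⟩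
    exact ⟨x.2.1, hx1, hx2⟩
  · rintro ⟨hg, h1, h2⟩
    exact ⟨⟨y, hg, ⟨s, h1⟩⟩, ⟨h1, h2⟩, rfl⟩

theorem isCompact_Bset (s : TChain Q) (F : Finset (TChain Q)) : IsCompact (Bset Q s F) := by
  rw [Subtype.isCompact_iff, val_image_Bset]
  apply IsClosed.isCompact
  refine (isClosed_good Q).inter ?_
  have heq : {y : TPt Q | y s = true ∧ ∀ t ∈ F, y t = false} =
      {y : TPt Q | y s = true} ∩ ⋂ (t : TChain Q) (_ : t ∈ F), {y | y t = false} := by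
    ext y
    simp only [mem_setOf_eq, mem_inter_iff, mem_iInter]
  rw [heq]
  exact (isClosed_eval Q s true).inter
    (isClosed_iInter fun t => isClosed_iInter fun _ => isClosed_eval Q t false)

/-! ### Nodes and branches -/

open Classical in
/-- The point whose true chains are exactly the prefixes of `s` (the "node" at `s`). -/
noncomputable def nodeFun (s : TChain Q) : TPt Q := fun t => decide (t.1 <+: s.1)

theorem nodeFun_eq_true {s t : TChain Q} : nodeFun Q s t = true ↔ t.1 <+: s.1 := by
  simp [nodeFun]

theorem nodeFun_mem (s : TChain Q) : nodeFun Q s ∈ WSet Q := by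
  refine ⟨⟨?_, ?_⟩, ⟨s, nodeFun_eq_true Q |>.2 (List.prefix_refl _)⟩⟩
  · intro a t h ha
    rw [nodeFun_eq_true] at ha ⊢
    exact h.trans ha
  · intro a t ha ht
    rw [nodeFun_eq_true] at ha ht
    exact List.prefix_or_prefix_of_prefix ha ht

noncomputable def nodePt (s : TChain Q) : WT Q := ⟨nodeFun Q s, nodeFun_mem Q s⟩

/-- `s` is the maximal true chain of `x`. -/
def IsEnd (x : WT Q) (s : TChain Q) : Prop :=
  x.1 s = true ∧ ∀ t, x.1 t = true → t.1 <+: s.1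

/-- `x` has arbitrarily long true chains. -/
def Branch (x : WT Q) : Prop := ∀ n : ℕ, ∃ s, x.1 s = true ∧ n < s.1.length

theorem isEnd_nodePt (s : TChain Q) : IsEnd Q (nodePt Q s) s :=
  ⟨nodeFun_eq_true Q |>.2 (List.prefix_refl _), fun t ht => (nodeFun_eq_true Q).1 ht⟩

theorem IsEnd.unique {x : WT Q} {s t : TChain Q} (hs : IsEnd Q x s) (ht : IsEnd Q x t) :
    s = t := by
  apply Subtype.ext
  have h1 := hs.2 t ht.1
  have h2 := ht.2 s hs.1
  exact (h2.eq_of_length (le_antisymm h2.length_le h1.length_le))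

theorem IsEnd.not_branch {x : WT Q} {s : TChain Q} (hs : IsEnd Q x s) : ¬ Branch Q x := by
  intro hbr
  obtain ⟨t, ht, hlen⟩ := hbr s.1.length
  exact absurd (hs.2 t ht).length_le (by omega)

theorem node_or_branch (x : WT Q) : (∃ s, IsEnd Q x s) ∨ Branch Q x := by
  by_cases h : ∃ n : ℕ, ∀ s, x.1 s = true → s.1.length ≤ n
  · left
    obtain ⟨n, hn⟩ := h
    set L : Set ℕ := {m | ∃ s, x.1 s = true ∧ s.1.length = m} with hL
    obtain ⟨s₀, hs₀⟩ := x.2.2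
    have hLne : L.Nonempty := ⟨s₀.1.length, s₀, hs₀, rfl⟩
    have hLbdd : BddAbove L := ⟨n, by rintro m ⟨s, hs, rfl⟩; exact hn s hs⟩
    obtain ⟨s, hs, hslen⟩ : sSup L ∈ L := Nat.sSup_mem hLne hLbdd
    refine ⟨s, hs, fun t ht => ?_⟩
    have htle : t.1.length ≤ s.1.length := by
      rw [hslen]
      exact le_csSup hLbdd ⟨t, ht, rfl⟩
    rcases x.2.1.2 s t hs ht with h1 | h1
    · have heq : s.1 = t.1 := h1.eq_of_length (le_antisymm h1.length_le htle)
      rw [heq]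
    · exact h1
  · right
    intro n
    push_neg at h
    obtain ⟨s, hs, hlen⟩ := h n
    exact ⟨s, hs, by omega⟩

theorem exists_dominating (x : WT Q) (T : Finset (TChain Q)) :
    ∃ s, x.1 s = true ∧ ∀ t ∈ T, x.1 t = true → t.1 <+: s.1 := by
  classical
  induction T using Finset.induction with
  | empty =>
    obtain ⟨s, hs⟩ := x.2.2
    exact ⟨s, hs, by simp⟩
  | @insert a T ha ih =>
    obtain ⟨s, hs, hdom⟩ := ih
    by_cases hxa : x.1 a = true
    · rcases x.2.1.2 a s hxa hs with h1 | h1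
      · refine ⟨s, hs, fun t ht hxt => ?_⟩
        rcases Finset.mem_insert.1 ht with rfl | ht'
        · exact h1
        · exact hdom t ht' hxt
      · refine ⟨a, hxa, fun t ht hxt => ?_⟩
        rcases Finset.mem_insert.1 ht with rfl | ht'
        · exact List.prefix_refl _
        · exact (hdom t ht' hxt).trans h1
    · refine ⟨s, hs, fun t ht hxt => ?_⟩
      rcases Finset.mem_insert.1 ht with rfl | ht'
      · exact absurd hxt hxa
      · exact hdom t ht' hxt

/-- The master neighbourhood-basis lemma. -/
theorem key_base (x : WT Q) (U : Set (WT Q)) (hU : U ∈ nhds x) :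
    ∃ (s : TChain Q) (F : Finset (TChain Q)), x.1 s = true ∧
      (∀ t ∈ F, ¬ t.1 <+: s.1) ∧ x ∈ Bset Q s F ∧ Bset Q s F ⊆ U ∧
      (∀ e, IsEnd Q x e → s = e) := by
  classical
  obtain ⟨U', hU'sub, hU'open, hxU'⟩ := mem_nhds_iff.1 hU
  obtain ⟨V, hV, hVeq⟩ := isOpen_induced_iff.1 hU'open
  have hxV : x.1 ∈ V := by
    rw [← hVeq] at hxU'; exact hxU'
  obtain ⟨I, u, hIu, hpi⟩ := isOpen_pi_iff.1 hV x.1 hxV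
  have hcyl : ∀ y : WT Q, (∀ t ∈ I, y.1 t = x.1 t) → y ∈ U' := by
    intro y hy
    rw [← hVeq]
    apply hpi
    intro t ht
    rw [hy t ht]
    exact (hIu t ht).2
  obtain ⟨s, hs, hdom, hend⟩ : ∃ s, x.1 s = true ∧
      (∀ t ∈ I, x.1 t = true → t.1 <+: s.1) ∧ (∀ e, IsEnd Q x e → s = e) := by
    rcases node_or_branch Q x with ⟨e, he⟩ | hbr
    · exact ⟨e, he.1, fun t _ ht => he.2 t ht, fun e' he' => he'.unique Q he ▸ rfl⟩
    · obtain ⟨s, hs, hdom⟩ := exists_dominating Q x I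
      exact ⟨s, hs, hdom, fun e' he' => absurd hbr he'.not_branch⟩
  set F : Finset (TChain Q) := I.filter (fun t => x.1 t = false) with hF
  have hFmem : ∀ t, t ∈ F ↔ t ∈ I ∧ x.1 t = false := by
    intro t; simp [hF]
  refine ⟨s, F, hs, ?_, ⟨hs, ?_⟩, ?_, hend⟩
  · intro t ht hpre
    have h1 := (hFmem t).1 ht
    have := x.2.1.1 s t hpre hs
    rw [h1.2] at this; cases this
  · intro t ht
    exact ((hFmem t).1 ht).2
  · intro y hy
    apply hU'sub
    apply hcyl
    intro t ht
    cases hxt : x.1 t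
    · have : t ∈ F := (hFmem t).2 ⟨ht, hxt⟩
      rw [hy.2 t this]
    · have hpre := hdom t ht hxt
      rw [y.2.1.1 s t hpre hy.1]

instance : LocallyCompactSpace (WT Q) := by
  constructor
  intro x n hn
  obtain ⟨s, F, _, _, hxB, hBn, _⟩ := key_base Q x n hn
  exact ⟨Bset Q s F, (isOpen_Bset Q s F).mem_nhds hxB, hBn, isCompact_Bset Q s F⟩

example [Countable Q] : SecondCountableTopology (WT Q) := inferInstance
example : T2Space (WT Q) := inferInstance
example : TotallyDisconnectedSpace (WT Q) := inferInstance

/-! ### Branch structure -/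

theorem branch_exists_len {x : WT Q} (hbr : Branch Q x) (n : ℕ) :
    ∃ s, x.1 s = true ∧ s.1.length = n + 1 := by
  obtain ⟨s, hs, hlen⟩ := hbr n
  refine ⟨⟨s.1.take (n+1), ?_, s.2.2.take _⟩, ?_, ?_⟩
  · have : (s.1.take (n+1)).length = n+1 := by
      rw [List.length_take]; omega
    intro h
    rw [h] at this; simp at this
  · exact x.2.1.1 s _ (List.take_prefix _ _) hs
  · show (s.1.take (n+1)).length = n+1
    rw [List.length_take]; omega

theorem true_unique_of_len {x : WT Q} {s t : TChain Q} (hs : x.1 s = true)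
    (ht : x.1 t = true) (hlen : s.1.length = t.1.length) : s = t := by
  apply Subtype.ext
  rcases x.2.1.2 s t hs ht with h | h
  · exact h.eq_of_length hlen
  · exact (h.eq_of_length hlen.symm).symm

/-- The set of labels occurring along a point. -/
def labSet (x : WT Q) : Set Q := {p | ∃ s, x.1 s = true ∧ TChain.lastL s = p}

theorem branch_label_gt {x : WT Q} (hbr : Branch Q x) {s : TChain Q}
    (hs : x.1 s = true) : ∃ t, x.1 t = true ∧ s.1 <+: t.1 ∧ s ≠ t := by
  obtain ⟨t, ht, hlen⟩ := hbr s.1.length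
  have hpre : s.1 <+: t.1 := by
    rcases x.2.1.2 s t hs ht with h | h
    · exact h
    · exact absurd h.length_le (by omega)
  exact ⟨t, ht, hpre, fun heq => by rw [heq] at hlen; omega⟩

/-! ### The partition -/

def XS (gl : WT Q → Option Q) : Q → Set (WT Q) := fun p => {x | gl x = some p}

theorem exists_ext (s : TChain Q) (q : Q) (hq : TChain.lastL s < q) (F : Finset (TChain Q)) :
    ∃ s' : TChain Q, s.1 <+: s'.1 ∧ TChain.lastL s' = q ∧ s ≠ s' ∧
      ∀ t ∈ F, t.1 <+: s'.1 → t.1 <+: s.1 := by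
  have hfin : {m : ℕ | TChain.concat s q m hq ∈ F}.Finite :=
    Set.Finite.preimage ((TChain.concat_injective s q hq).injOn) F.finite_toSet
  obtain ⟨m, hm⟩ := hfin.infinite_compl.nonempty
  refine ⟨TChain.concat s q m hq, TChain.prefix_concat_self s q m hq,
    TChain.concat_lastL s q m hq, TChain.concat_ne s q m hq, ?_⟩
  intro t ht hpre
  rcases TChain.prefix_concat_cases hpre with h | h
  · exact h
  · rw [h] at ht
    exact absurd ht hm

/-- A length-one chain. -/
def single (p : Q) : TChain Q := ⟨[(p, 0)], by simp, List.isChain_singleton _⟩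

theorem single_lastL (p : Q) : TChain.lastL (single Q p) = p := rfl

section GLsec

variable (gl : WT Q → Option Q)
  (hnode : ∀ (x : WT Q) e, IsEnd Q x e → gl x = some (TChain.lastL e))
  (hbrl : ∀ (x : WT Q) p, Branch Q x → gl x = some p → IsLUB (labSet Q x) p)

include hnode hbrl in
theorem ptype_Bset (s : TChain Q) (F : Finset (TChain Q)) (hF : ∀ t ∈ F, ¬ t.1 <+: s.1) :
    ptype (XS Q gl) (Bset Q s F) = Ici (TChain.lastL s) := by
  ext q
  constructor
  · rintro ⟨x, ⟨hxs, hxF⟩, hxq⟩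
    have hxq' : gl x = some q := hxq
    rcases node_or_branch Q x with ⟨e, he⟩ | hbr
    · have h1 := hnode x e he
      rw [hxq'] at h1
      have hq : q = TChain.lastL e := Option.some_injective _ h1
      rw [mem_Ici, hq]
      exact TChain.lastL_le_of_prefix (he.2 s hxs)
    · have hlub := hbrl x q hbr hxq'
      exact hlub.1 ⟨s, hxs, rfl⟩
  · intro hq
    rw [mem_Ici] at hq
    rcases hq.lt_or_eq with hlt | heq
    · obtain ⟨s', hpre, hlast, _, hext⟩ := exists_ext Q s q hlt F
      refine ⟨nodePt Q s', ⟨?_, ?_⟩, ?_⟩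
      · exact (nodeFun_eq_true Q).2 hpre
      · intro t ht
        rw [Bool.eq_false_iff]
        intro htrue
        exact hF t ht (hext t ht ((nodeFun_eq_true Q).1 htrue))
      · show gl _ = some q
        rw [hnode _ s' (isEnd_nodePt Q s'), hlast]
    · refine ⟨nodePt Q s, ⟨?_, ?_⟩, ?_⟩
      · exact (nodeFun_eq_true Q).2 (List.prefix_refl _)
      · intro t ht
        rw [Bool.eq_false_iff]
        intro htrue
        exact hF t ht ((nodeFun_eq_true Q).1 htrue)
      · show gl _ = some q
        rw [hnode _ s (isEnd_nodePt Q s), heq]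

include hnode hbrl in
theorem isTrim_Bset (s : TChain Q) (F : Finset (TChain Q)) (hF : ∀ t ∈ F, ¬ t.1 <+: s.1) :
    IsTrimSet (XS Q gl) (TChain.lastL s) (Bset Q s F) :=
  ⟨isCompact_Bset Q s F, isOpen_Bset Q s F, ptype_Bset Q gl hnode hbrl s F hF⟩

include hnode hbrl in
theorem node_clean (p : Q) (x : WT Q) (hx : x ∈ XS Q gl p) (e : TChain Q) (he : IsEnd Q x e) :
    ∃ A, IsTrimSet (XS Q gl) p A ∧ x ∈ A := by
  have hpe : p = TChain.lastL e :=
    Option.some_injective _ ((show gl x = some p from hx).symm.trans (hnode x e he))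
  refine ⟨Bset Q e ∅, ?_, ⟨he.1, by simp⟩⟩
  rw [hpe]
  exact isTrim_Bset Q gl hnode hbrl e ∅ (by simp)

include hnode hbrl in
theorem semiTrim_XS : IsSemiTrim (XS Q gl) := by
  have hBset := isTrim_Bset Q gl hnode hbrl
  refine { nonempty := ?_, pairwise_disjoint := ?_, nhds_base := ?_, trim_dense := ?_,
           label_sup := ?_, full := ?_ }
  · intro p
    refine ⟨nodePt Q (single Q p), ?_⟩
    show gl _ = some p
    rw [hnode _ _ (isEnd_nodePt Q (single Q p)), single_lastL]
  · intro p q hne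
    rw [Set.disjoint_left]
    intro x hxp hxq
    exact hne (Option.some_injective _
      ((show gl x = some p from hxp).symm.trans (show gl x = some q from hxq)))
  · intro w U hU
    obtain ⟨s, F, hws, hF, hxB, hBU, _⟩ := key_base Q w U hU
    exact ⟨_, _, hBset s F hF, hxB, hBU⟩
  · intro A hA p hp
    obtain ⟨x, hxA, hxp⟩ := hp.1
    have hxp' : gl x = some p := hxp
    rcases node_or_branch Q x with ⟨e, he⟩ | hbr
    · have hpe : p = TChain.lastL e :=
        Option.some_injective _ (hxp'.symm.trans (hnode x e he))
      obtain ⟨s, F, hws, hF, hxB, hBU, hend⟩ := key_base Q x A (hA.mem_nhds hxA)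
      have hse : s = e := hend e he
      refine ⟨Bset Q s F, hBU, ?_⟩
      rw [hpe, ← hse]
      exact hBset s F hF
    · have hlub := hbrl x p hbr hxp'
      obtain ⟨s, F, hws, hF, hxB, hBU, _⟩ := key_base Q x A (hA.mem_nhds hxA)
      obtain ⟨t, hxt, hpre, hnet⟩ := branch_label_gt Q hbr hws
      have hsp : TChain.lastL s < p :=
        (TChain.lastL_lt_of_prefix_ne hpre hnet).trans_le (hlub.1 ⟨t, hxt, rfl⟩)
      obtain ⟨s', hpre', hlast', hne', hext⟩ := exists_ext Q s p hsp F
      have hF' : ∀ t' ∈ F, ¬ t'.1 <+: s'.1 := fun t' ht' hp' => hF t' ht' (hext t' ht' hp')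
      refine ⟨Bset Q s' F, ?_, ?_⟩
      · intro y hy
        exact hBU ⟨y.2.1.1 s' s hpre' hy.1, hy.2⟩
      · rw [← hlast']
        exact hBset s' F hF'
  · intro p x hxp
    have hxp' : gl x = some p := hxp
    constructor
    · rintro q ⟨A, hA, hxA⟩
      exact le_of_trim_mem hA hxA hxp
    · intro u hu
      rcases node_or_branch Q x with ⟨e, he⟩ | hbr
      · have hpe : p = TChain.lastL e :=
          Option.some_injective _ (hxp'.symm.trans (hnode x e he))
        refine hu ⟨Bset Q e ∅, ?_, ⟨he.1, by simp⟩⟩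
        rw [hpe]
        exact hBset e ∅ (by simp)
      · have hlub := hbrl x p hbr hxp'
        refine hlub.2 (fun q hq => ?_)
        obtain ⟨t, hxt, rfl⟩ := hq
        exact hu ⟨Bset Q t ∅, hBset t ∅ (by simp), ⟨hxt, by simp⟩⟩
  · intro p w hw
    rcases node_or_branch Q w with ⟨e, he⟩ | hbr
    · obtain ⟨A, hA, hwA, hAsub⟩ := hw (Bset Q e ∅)
        ((isOpen_Bset Q e ∅).mem_nhds ⟨he.1, by simp⟩)
      have h1 : Ici p ⊆ Ici (TChain.lastL e) := by
        have h := ptype_mono_s16 (X := XS Q gl) hAsub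
        rwa [hA.2.2, ptype_Bset Q gl hnode hbrl e ∅ (by simp)] at h
      have h2 : TChain.lastL e ≤ p := h1 self_mem_Ici
      have h3 : p ≤ TChain.lastL e :=
        le_of_trim_mem hA hwA (show gl w = some (TChain.lastL e) from hnode w e he)
      show gl w = some p
      rw [hnode w e he, le_antisymm h3 h2]
    · obtain ⟨A, hA, hwA, _⟩ := hw univ Filter.univ_mem
      obtain ⟨s, F, hws, hF, hwB, hBA, _⟩ := key_base Q w A (hA.2.1.mem_nhds hwA)
      have h1 : Ici (TChain.lastL s) ⊆ Ici p := by
        have h := ptype_mono_s16 (X := XS Q gl) hBA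
        rwa [hA.2.2, ptype_Bset Q gl hnode hbrl s F hF] at h
      have hps : p ≤ TChain.lastL s := h1 self_mem_Ici
      obtain ⟨t, hxt, hpre, hnet⟩ := branch_label_gt Q hbr hws
      obtain ⟨A', hA', hwA', hA'sub⟩ := hw (Bset Q t ∅)
        ((isOpen_Bset Q t ∅).mem_nhds ⟨hxt, by simp⟩)
      have h2 : Ici p ⊆ Ici (TChain.lastL t) := by
        have h := ptype_mono_s16 (X := XS Q gl) hA'sub
        rwa [hA'.2.2, ptype_Bset Q gl hnode hbrl t ∅ (by simp)] at h
      have htp : TChain.lastL t ≤ p := h2 self_mem_Ici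
      exact ((lt_irrefl _ (((TChain.lastL_lt_of_prefix_ne hpre hnet).trans_le htp).trans_le
        hps))).elim


end GLsec

/-! ### Branch label sequences and labelings -/

noncomputable def brch (x : WT Q) (hbr : Branch Q x) (n : ℕ) : TChain Q :=
  (branch_exists_len Q hbr n).choose

theorem brch_true (x : WT Q) (hbr : Branch Q x) (n : ℕ) : x.1 (brch Q x hbr n) = true :=
  (branch_exists_len Q hbr n).choose_spec.1

theorem brch_len (x : WT Q) (hbr : Branch Q x) (n : ℕ) : (brch Q x hbr n).1.length = n + 1 :=
  (branch_exists_len Q hbr n).choose_spec.2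

theorem brch_prefix (x : WT Q) (hbr : Branch Q x) {m n : ℕ} (h : m ≤ n) :
    (brch Q x hbr m).1 <+: (brch Q x hbr n).1 := by
  rcases x.2.1.2 _ _ (brch_true Q x hbr m) (brch_true Q x hbr n) with h1 | h1
  · exact h1
  · have hle := h1.length_le
    rw [brch_len, brch_len] at hle
    have heq : (brch Q x hbr n).1 = (brch Q x hbr m).1 := by
      apply h1.eq_of_length
      rw [brch_len, brch_len]
      omega
    rw [heq]

theorem brch_mono (x : WT Q) (hbr : Branch Q x) :
    Monotone (fun n => TChain.lastL (brch Q x hbr n)) := fun m n h =>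
  TChain.lastL_le_of_prefix (brch_prefix Q x hbr h)

theorem brch_strict (x : WT Q) (hbr : Branch Q x) :
    StrictMono (fun n => TChain.lastL (brch Q x hbr n)) := by
  apply strictMono_nat_of_lt_succ
  intro n
  apply TChain.lastL_lt_of_prefix_ne (brch_prefix Q x hbr (Nat.le_succ n))
  intro h
  have := congrArg (fun t : TChain Q => t.1.length) h
  simp only [brch_len] at this
  omega

theorem labSet_eq_range (x : WT Q) (hbr : Branch Q x) :
    labSet Q x = Set.range (fun n => TChain.lastL (brch Q x hbr n)) := by
  ext q
  constructor
  · rintro ⟨s, hs, rfl⟩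
    have hpos : 0 < s.1.length := List.length_pos_iff.2 s.2.1
    refine ⟨s.1.length - 1, ?_⟩
    have heq : brch Q x hbr (s.1.length - 1) = s := by
      apply true_unique_of_len Q (brch_true Q x hbr _) hs
      rw [brch_len]; omega
    show TChain.lastL (brch Q x hbr (s.1.length - 1)) = TChain.lastL s
    rw [heq]
  · rintro ⟨n, rfl⟩
    exact ⟨brch Q x hbr n, brch_true Q x hbr n, rfl⟩

theorem branch_of_not_end {x : WT Q} (h : ¬ ∃ e, IsEnd Q x e) : Branch Q x :=
  (node_or_branch Q x).resolve_left h

open Classical in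
/-- Labeling with nodes only. -/
noncomputable def glNode : WT Q → Option Q := fun x =>
  if h : ∃ e, IsEnd Q x e then some (TChain.lastL h.choose) else none

theorem glNode_node : ∀ (x : WT Q) e, IsEnd Q x e → glNode Q x = some (TChain.lastL e) := by
  intro x e he
  have h : ∃ e, IsEnd Q x e := ⟨e, he⟩
  rw [glNode, dif_pos h, (h.choose_spec).unique Q he]

theorem glNode_branch : ∀ (x : WT Q) p, Branch Q x → glNode Q x = some p →
    IsLUB (labSet Q x) p := by
  intro x p hbr hp
  have h : ¬ ∃ e, IsEnd Q x e := fun ⟨e, he⟩ => he.not_branch Q hbr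
  rw [glNode, dif_neg h] at hp
  cases hp

open Classical in
/-- Labeling of everything, given ω-completeness. -/
noncomputable def glFull (hω : ∀ f : ℕ → Q, Monotone f → ∃ q, IsLUB (Set.range f) q) :
    WT Q → Option Q := fun x =>
  if h : ∃ e, IsEnd Q x e then some (TChain.lastL h.choose)
  else some (hω (fun n => TChain.lastL (brch Q x (branch_of_not_end Q h) n))
    (brch_mono Q x (branch_of_not_end Q h))).choose

theorem glFull_node (hω : ∀ f : ℕ → Q, Monotone f → ∃ q, IsLUB (Set.range f) q) :
    ∀ (x : WT Q) e, IsEnd Q x e → glFull Q hω x = some (TChain.lastL e) := by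
  intro x e he
  have h : ∃ e, IsEnd Q x e := ⟨e, he⟩
  rw [glFull, dif_pos h, (h.choose_spec).unique Q he]

theorem glFull_branch (hω : ∀ f : ℕ → Q, Monotone f → ∃ q, IsLUB (Set.range f) q) :
    ∀ (x : WT Q) p, Branch Q x → glFull Q hω x = some p → IsLUB (labSet Q x) p := by
  intro x p hbr hp
  have h : ¬ ∃ e, IsEnd Q x e := fun ⟨e, he⟩ => he.not_branch Q hbr
  rw [glFull, dif_neg h] at hp
  have hspec := (hω (fun n => TChain.lastL (brch Q x (branch_of_not_end Q h) n))
    (brch_mono Q x (branch_of_not_end Q h))).choose_spec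
  have hpeq := Option.some_injective _ hp
  rw [hpeq] at hspec
  rwa [labSet_eq_range Q x hbr]

theorem glFull_total (hω : ∀ f : ℕ → Q, Monotone f → ∃ q, IsLUB (Set.range f) q) :
    (⋃ p, XS Q (glFull Q hω) p) = univ := by
  apply eq_univ_of_forall
  intro x
  rcases hgl : glFull Q hω x with _ | p
  · exfalso
    by_cases h : ∃ e, IsEnd Q x e
    · rw [glFull, dif_pos h] at hgl; cases hgl
    · rw [glFull, dif_neg h] at hgl; cases hgl
  · exact mem_iUnion.2 ⟨p, hgl⟩

theorem no_branch_of_acc (hacc : ∀ f : ℕ → Q, ¬ StrictMono f) (x : WT Q) :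
    ∃ e, IsEnd Q x e := by
  by_contra h
  exact hacc _ (brch_strict Q x (branch_of_not_end Q h))

theorem glNode_total_of_acc (hacc : ∀ f : ℕ → Q, ¬ StrictMono f) :
    (⋃ p, XS Q (glNode Q) p) = univ := by
  apply eq_univ_of_forall
  intro x
  obtain ⟨e, he⟩ := no_branch_of_acc Q hacc x
  exact mem_iUnion.2 ⟨TChain.lastL e, glNode_node Q x e he⟩

/-! ### ω-Stone packaging -/

theorem WT_omegaStone [Countable Q] : IsOmegaStone (WT Q) :=
  ⟨inferInstance, inferInstance, inferInstance, inferInstance⟩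

/-! ### Transfer along an order equivalence -/

section Transfer

variable {P Q' : Type*} [PartialOrder P] [PartialOrder Q'] {W' : Type*} [TopologicalSpace W']
variable (e : P ≃ Q') (he : ∀ a b : P, e a ≤ e b ↔ a ≤ b)

/-- The order isomorphism induced by `e`. -/
def toOrderIso : P ≃o Q' := { e with map_rel_iff' := @fun a b => he a b }

include he in
theorem image_Ici_transfer (p : P) : e '' Ici p = Ici (e p) := by
  ext b
  constructor
  · rintro ⟨a, ha, rfl⟩
    exact (he p a).2 ha
  · intro hb
    refine ⟨e.symm b, ?_, e.apply_symm_apply b⟩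
    have := (he p (e.symm b)).1
    rw [e.apply_symm_apply] at this
    exact this hb

theorem ptype_transfer (X : Q' → Set W') (A : Set W') :
    ptype (fun p => X (e p)) A = e ⁻¹' ptype X A := rfl

include he in
theorem trim_transfer (X : Q' → Set W') (p : P) (A : Set W') :
    IsTrimSet (fun p => X (e p)) p A ↔ IsTrimSet X (e p) A := by
  unfold IsTrimSet
  refine and_congr_right fun _ => and_congr_right fun _ => ?_
  rw [ptype_transfer]
  constructor
  · intro h
    rw [← Set.image_preimage_eq (ptype X A) e.surjective, h, image_Ici_transfer e he]
  · intro h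
    rw [h]
    ext q
    simp only [mem_preimage, mem_Ici]
    exact he p q

include he in
theorem lub_transfer {S : Set Q'} {p : P} (h : IsLUB S (e p)) : IsLUB (e ⁻¹' S) p := by
  have himg : e ⁻¹' S = (toOrderIso e he).symm '' S := by
    ext a
    constructor
    · intro ha
      exact ⟨e a, ha, e.symm_apply_apply a⟩
    · rintro ⟨b, hb, rfl⟩
      show e ((toOrderIso e he).symm b) ∈ S
      have : e ((toOrderIso e he).symm b) = b := e.apply_symm_apply b
      rwa [this]
  rw [himg]
  rw [OrderIso.isLUB_image]
  have hsymm : (toOrderIso e he).symm.symm p = e p := rfl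
  rwa [hsymm]

include he in
theorem semiTrim_transfer {X : Q' → Set W'} (hst : IsSemiTrim X) :
    IsSemiTrim (fun p => X (e p)) := by
  refine { nonempty := ?_, pairwise_disjoint := ?_, nhds_base := ?_, trim_dense := ?_,
           label_sup := ?_, full := ?_ }
  · exact fun p => hst.nonempty (e p)
  · exact fun p q hne => hst.pairwise_disjoint (fun h => hne (e.injective h))
  · intro w U hU
    obtain ⟨q, A, hA, hwA, hAU⟩ := hst.nhds_base w U hU
    refine ⟨e.symm q, A, ?_, hwA, hAU⟩
    rw [trim_transfer e he, e.apply_symm_apply]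
    exact hA
  · intro A hA p hp
    obtain ⟨hp1, hp2⟩ := hp
    have hp2' : e p ∈ trimHat X := by
      obtain ⟨B, hB⟩ := hp2
      exact ⟨B, (trim_transfer e he X p B).1 hB⟩
    obtain ⟨B, hBA, hB⟩ := hst.trim_dense A hA (e p) ⟨hp1, hp2'⟩
    exact ⟨B, hBA, (trim_transfer e he X p B).2 hB⟩
  · intro p x hx
    have h := hst.label_sup (e p) x hx
    have heq : {q | ∃ A, IsTrimSet (fun p => X (e p)) q A ∧ x ∈ A} =
        e ⁻¹' {q | ∃ A, IsTrimSet X q A ∧ x ∈ A} := by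
      ext q
      simp only [mem_setOf_eq, mem_preimage]
      exact exists_congr fun A => and_congr_left fun _ => trim_transfer e he X q A
    rw [heq]
    exact lub_transfer e he h
  · intro p w hw
    apply hst.full (e p) w
    intro U hU
    obtain ⟨A, hA, hwA, hAU⟩ := hw U hU
    exact ⟨A, (trim_transfer e he X p A).1 hA, hwA, hAU⟩

theorem complete_transfer {X : Q' → Set W'} (hc : (⋃ q, X q) = univ) :
    (⋃ p, X (e p)) = univ := by
  rw [Function.Surjective.iUnion_comp e.surjective]
  exact hc

include he in
theorem clean_transfer {X : Q' → Set W'}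
    (hc : ∀ q, ∀ x ∈ X q, ∃ A, IsTrimSet X q A ∧ x ∈ A) :
    ∀ p, ∀ x ∈ (fun p => X (e p)) p, ∃ A, IsTrimSet (fun p => X (e p)) p A ∧ x ∈ A := by
  intro p x hx
  obtain ⟨A, hA, hxA⟩ := hc (e p) x hx
  exact ⟨A, (trim_transfer e he X p A).2 hA, hxA⟩

include he in
theorem mono_lub_transfer
    (hω : ∀ f : ℕ → P, Monotone f → ∃ q : P, IsLUB (Set.range f) q) :
    ∀ g : ℕ → Q', Monotone g → ∃ q : Q', IsLUB (Set.range g) q := by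
  intro g hg
  obtain ⟨q, hq⟩ := hω (fun n => (toOrderIso e he).symm (g n))
    ((toOrderIso e he).symm.monotone.comp hg)
  refine ⟨e q, ?_⟩
  have hrange : Set.range g = (toOrderIso e he) '' Set.range
      (fun n => (toOrderIso e he).symm (g n)) := by
    ext b
    constructor
    · rintro ⟨n, rfl⟩
      exact ⟨(toOrderIso e he).symm (g n), ⟨n, rfl⟩, e.apply_symm_apply (g n)⟩
    · rintro ⟨a, ⟨n, rfl⟩, rfl⟩
      exact ⟨n, (e.apply_symm_apply (g n)).symm⟩
  rw [hrange]
  exact ((toOrderIso e he).isLUB_image').2 hq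

include he in
theorem acc_transfer (hacc : ∀ f : ℕ → P, ¬ StrictMono f) :
    ∀ g : ℕ → Q', ¬ StrictMono g := by
  intro g hg
  exact hacc _ ((toOrderIso e he).symm.strictMono.comp hg)

end Transfer

/-! ### Packaged constructions -/

theorem construction_i [Countable Q] :
    ∃ X : Q → Set (WT Q), IsSemiTrim X ∧
      ∀ p, ∀ x ∈ X p, ∃ A, IsTrimSet X p A ∧ x ∈ A := by
  refine ⟨XS Q (glNode Q), semiTrim_XS Q _ (glNode_node Q) (glNode_branch Q), ?_⟩
  intro p x hx
  by_cases h : ∃ e, IsEnd Q x e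
  · obtain ⟨e, he⟩ := h
    exact node_clean Q _ (glNode_node Q) (glNode_branch Q) p x hx e he
  · exfalso
    have hx' : glNode Q x = some p := hx
    rw [glNode, dif_neg h] at hx'
    cases hx'

theorem construction_iii [Countable Q]
    (hω : ∀ f : ℕ → Q, Monotone f → ∃ q, IsLUB (Set.range f) q) :
    ∃ X : Q → Set (WT Q), IsSemiTrim X ∧ (⋃ p, X p) = univ :=
  ⟨XS Q (glFull Q hω), semiTrim_XS Q _ (glFull_node Q hω) (glFull_branch Q hω),
    glFull_total Q hω⟩

theorem construction_iv [Countable Q] (hacc : ∀ f : ℕ → Q, ¬ StrictMono f) :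
    ∃ X : Q → Set (WT Q), IsSemiTrim X ∧ (⋃ p, X p) = univ ∧
      ∀ p, ∀ x ∈ X p, ∃ A, IsTrimSet X p A ∧ x ∈ A := by
  refine ⟨XS Q (glNode Q), semiTrim_XS Q _ (glNode_node Q) (glNode_branch Q),
    glNode_total_of_acc Q hacc, ?_⟩
  intro p x hx
  obtain ⟨e, he⟩ := no_branch_of_acc Q hacc x
  exact node_clean Q _ (glNode_node Q) (glNode_branch Q) p x hx e he

/-! ### The main theorem -/

/-- (Existence.) Let `P` be a countable poset. Then:
(i) some ω-Stone space admits a trim `P`-partition;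
(ii) some ω-Stone space admits a good `P`-partition iff `P` is ω-complete;
(iii) some ω-Stone space admits a complete semi-trim `P`-partition iff `P` is ω-complete;
(iv) some ω-Stone space admits a complete trim `P`-partition iff `P` satisfies the ACC. -/
theorem existence_of_partitions [Countable P] :
    (∃ (W : Type) (_ : TopologicalSpace W), IsOmegaStone W ∧
      ∃ X : P → Set W, IsSemiTrim X ∧
        ∀ p, ∀ x ∈ X p, ∃ A, IsTrimSet X p A ∧ x ∈ A) ∧
    ((∃ (W : Type) (_ : TopologicalSpace W), IsOmegaStone W ∧
        ∃ X : P → Set W, IsPPartition X ∧ (⋃ p, X p) = univ ∧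
          ∀ p, closure (X p) = ⋃ q ≤ p, X q) ↔
      (∀ f : ℕ → P, Monotone f → ∃ q : P, IsLUB (range f) q)) ∧
    ((∃ (W : Type) (_ : TopologicalSpace W), IsOmegaStone W ∧
        ∃ X : P → Set W, IsSemiTrim X ∧ (⋃ p, X p) = univ) ↔
      (∀ f : ℕ → P, Monotone f → ∃ q : P, IsLUB (range f) q)) ∧
    ((∃ (W : Type) (_ : TopologicalSpace W), IsOmegaStone W ∧
        ∃ X : P → Set W, IsSemiTrim X ∧ (⋃ p, X p) = univ ∧
          ∀ p, ∀ x ∈ X p, ∃ A, IsTrimSet X p A ∧ x ∈ A) ↔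
      (∀ f : ℕ → P, ¬ StrictMono f)) := by
  haveI : Small.{0} P := Countable.toSmall P
  letI : PartialOrder (Shrink.{0} P) :=
    PartialOrder.lift (equivShrink P).symm (equivShrink P).symm.injective
  haveI : Countable (Shrink.{0} P) := Countable.of_equiv P (equivShrink P)
  let e : P ≃ Shrink.{0} P := equivShrink P
  have he : ∀ a b : P, e a ≤ e b ↔ a ≤ b := by
    intro a b
    change (equivShrink P).symm (equivShrink P a) ≤ (equivShrink P).symm (equivShrink P b) ↔ _
    rw [Equiv.symm_apply_apply, Equiv.symm_apply_apply]
  refine ⟨?_, ?_, ?_, ?_⟩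
  · -- (i)
    obtain ⟨X₀, hst₀, hclean₀⟩ := construction_i (Shrink.{0} P)
    exact ⟨WT (Shrink.{0} P), inferInstance, WT_omegaStone (Shrink.{0} P),
      fun p => X₀ (e p), semiTrim_transfer e he hst₀, clean_transfer e he hclean₀⟩
  · -- (ii)
    constructor
    · rintro ⟨W', tW, hW, X, hpart, hcompl, hgood⟩
      apply good_to_omegaComplete hW.1 hW.2.2.1 hpart.nonempty hcompl ?_ ?_
      · intro q u hle x hx
        rw [hgood u]
        exact mem_iUnion.2 ⟨q, mem_iUnion.2 ⟨hle, hx⟩⟩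
      · intro q u x hxq hxcl
        rw [hgood u] at hxcl
        obtain ⟨q', hq'⟩ := mem_iUnion.1 hxcl
        obtain ⟨hle, hx'⟩ := mem_iUnion.1 hq'
        rwa [label_eq hpart hxq hx']
    · intro hω
      obtain ⟨X₀, hst₀, hcompl₀⟩ := construction_iii (Shrink.{0} P)
        (mono_lub_transfer e he hω)
      have hst := semiTrim_transfer e he hst₀
      have hcompl := complete_transfer e hcompl₀
      exact ⟨WT (Shrink.{0} P), inferInstance, WT_omegaStone (Shrink.{0} P),
        fun p => X₀ (e p), hst.toIsPPartition, hcompl, semiTrim_good hst hcompl⟩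
  · -- (iii)
    constructor
    · rintro ⟨W', tW, hW, X, hst, hcompl⟩
      exact good_to_omegaComplete hW.1 hW.2.2.1 hst.nonempty hcompl
        (fun q u hle => subset_closure_of_le hst hle)
        (fun q u x hxq hxcl => le_of_mem_closure hst hxq hxcl)
    · intro hω
      obtain ⟨X₀, hst₀, hcompl₀⟩ := construction_iii (Shrink.{0} P)
        (mono_lub_transfer e he hω)
      exact ⟨WT (Shrink.{0} P), inferInstance, WT_omegaStone (Shrink.{0} P),
        fun p => X₀ (e p), semiTrim_transfer e he hst₀, complete_transfer e hcompl₀⟩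
  · -- (iv)
    constructor
    · rintro ⟨W', tW, hW, X, hst, hcompl, hclean⟩
      exact trim_to_acc hW.1 hW.2.2.1 hW.2.2.2 hst hcompl hclean
    · intro hacc
      obtain ⟨X₀, hst₀, hcompl₀, hclean₀⟩ := construction_iv (Shrink.{0} P)
        (acc_transfer e he hacc)
      exact ⟨WT (Shrink.{0} P), inferInstance, WT_omegaStone (Shrink.{0} P),
        fun p => X₀ (e p), semiTrim_transfer e he hst₀, complete_transfer e hcompl₀,
        clean_transfer e he hclean₀⟩
end
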